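/- arXiv:2001.00469 — 7 statements merged into one kernel-verified Lean document; each statement's English description precedes it below -/
import Mathlib

section
/- For any cycle C_n of order n ≥ 3, the packing chromatic number of C_n equals 3 if n = 3 or n is divisible by 4, and equals 4 otherwise. -/
open SimpleGraph

/-- A `k`-packing coloring: colors in `{1,…,k}`, and distinct vertices with the same
color `i` are at distance greater than `i`. -/
def IsPackingColoring {V : Type*} (G : SimpleGraph V) (k : ℕ) (c : V → ℕ) : Prop :=
  (∀ v, 1 ≤ c v ∧ c v ≤ k) ∧
  ∀ u v : V, u ≠ v → c u = c v → (c u : ℕ∞) < G.edist u v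

/-- The packing chromatic number: the least `k` admitting a `k`-packing coloring. -/
noncomputable def packingChromaticNumber {V : Type*} (G : SimpleGraph V) : ℕ :=
  sInf {k | ∃ c : V → ℕ, IsPackingColoring G k c}

/-- The finite super subdivision `FSSD_m(G)`: each edge `uv` of `G` is replaced by
`m` new common neighbors of `u` and `v` (the original edge is deleted). -/
def FSSD {V : Type*} (G : SimpleGraph V) (m : ℕ) :
    SimpleGraph (V ⊕ (G.edgeSet × Fin m)) where
  Adj x y :=
    match x, y with
    | Sum.inl u, Sum.inr e => u ∈ (e.1 : Sym2 V)
    | Sum.inr e, Sum.inl u => u ∈ (e.1 : Sym2 V)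
    | _, _ => False
  symm := ⟨by rintro (u | e) (v | f) h <;> simp_all⟩
  loopless := ⟨by rintro (u | e) h <;> simp_all⟩

/-- The neighborhood corona `G ⋆ H`: one copy of `G` and one copy of `H` for each
vertex of `G`; each vertex of the `i`-th copy of `H` is joined to all neighbors of
the `i`-th vertex of `G`. -/
def ncorona {V₁ V₂ : Type*} (G : SimpleGraph V₁) (H : SimpleGraph V₂) :
    SimpleGraph (V₁ ⊕ (V₁ × V₂)) where
  Adj x y :=
    match x, y with
    | Sum.inl u, Sum.inl v => G.Adj u v
    | Sum.inl u, Sum.inr p => G.Adj u p.1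
    | Sum.inr p, Sum.inl u => G.Adj u p.1
    | Sum.inr p, Sum.inr q => p.1 = q.1 ∧ H.Adj p.2 q.2
  symm := ⟨by rintro (u | p) (v | q) h <;> simp_all [adj_comm]⟩
  loopless := ⟨by rintro (u | p) h <;> simp_all⟩

/-- The splitting graph `S'(G) = G ⋆ K₁`. -/
def splittingGraph {V : Type*} (G : SimpleGraph V) : SimpleGraph (V ⊕ (V × Fin 1)) :=
  ncorona G (⊥ : SimpleGraph (Fin 1))

namespace PackAux

open Fin.NatCast Fin.CommRing

/-- cyclic distance on `Fin n` -/
def cd (n : ℕ) (u v : Fin n) : ℕ := min (v - u).val (u - v).val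

lemma sub_val {n : ℕ} (a b : Fin n) :
    (a - b).val = if b.val ≤ a.val then a.val - b.val else a.val + n - b.val := by
  have ha := a.isLt; have hb := b.isLt
  rw [Fin.sub_def]
  simp only
  split_ifs with h
  · have e : n - b.val + a.val = (a.val - b.val) + n := by omega
    rw [e, Nat.add_mod_right, Nat.mod_eq_of_lt (by omega)]
  · have e : n - b.val + a.val = a.val + n - b.val := by omega
    rw [e, Nat.mod_eq_of_lt (by omega)]

variable {m : ℕ}

lemma step {u x : Fin (m + 3)} (h : (cycleGraph (m + 3)).Adj u x) (v : Fin (m + 3)) :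
    cd (m + 3) u v ≤ cd (m + 3) x v + 1 := by
  rw [cycleGraph_adj'] at h
  have hu := u.isLt; have hx := x.isLt; have hv := v.isLt
  simp only [cd]
  rw [sub_val, sub_val, sub_val, sub_val]
  rcases h with h | h <;> rw [sub_val] at h <;> split_ifs at h ⊢ <;> omega

lemma walk_le {u v : Fin (m + 3)} (w : (cycleGraph (m + 3)).Walk u v) :
    cd (m + 3) u v ≤ w.length := by
  induction w with
  | nil => simp [cd, Fin.sub_self]
  | @cons a b c h p ih =>
    rw [SimpleGraph.Walk.length_cons]
    have := step h c
    omega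

lemma le_edist (u v : Fin (m + 3)) :
    (cd (m + 3) u v : ℕ∞) ≤ (cycleGraph (m + 3)).edist u v := by
  rw [SimpleGraph.edist_eq_sInf]
  refine le_sInf ?_
  rintro x ⟨w, rfl⟩
  show (cd (m + 3) u v : ℕ∞) ≤ (w.length : ℕ∞)
  exact_mod_cast walk_le w

lemma adj_succ (u : Fin (m + 3)) : (cycleGraph (m + 3)).Adj u (u + 1) := by
  rw [cycleGraph_adj']
  right
  rw [add_sub_cancel_left]
  exact Fin.val_one (m + 1)

lemma edist_shift (u : Fin (m + 3)) (k : ℕ) :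
    (cycleGraph (m + 3)).edist u (u + (k : Fin (m + 3))) ≤ (k : ℕ∞) := by
  induction k with
  | zero => simp [SimpleGraph.edist_self]
  | succ k ih =>
    have e : (u + ((k + 1 : ℕ) : Fin (m + 3))) = (u + (k : Fin (m + 3))) + 1 := by
      push_cast; ring
    rw [e]
    have h1 : (cycleGraph (m + 3)).edist (u + (k : Fin (m + 3)))
        ((u + (k : Fin (m + 3))) + 1) ≤ 1 := by
      have := SimpleGraph.edist_le (SimpleGraph.Walk.cons
        (adj_succ (u + (k : Fin (m + 3)))) SimpleGraph.Walk.nil)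
      simpa using this
    calc (cycleGraph (m + 3)).edist u ((u + (k : Fin (m + 3))) + 1)
        ≤ (cycleGraph (m + 3)).edist u (u + (k : Fin (m + 3))) +
          (cycleGraph (m + 3)).edist (u + (k : Fin (m + 3)))
            ((u + (k : Fin (m + 3))) + 1) := SimpleGraph.edist_triangle
      _ ≤ (k : ℕ∞) + 1 := add_le_add ih h1
      _ = ((k + 1 : ℕ) : ℕ∞) := by push_cast; ring

lemma shift_ne (u : Fin (m + 3)) {k : ℕ} (h1 : 0 < k) (h2 : k < m + 3) :
    u + (k : Fin (m + 3)) ≠ u := by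
  intro h
  have h0 := congrArg Fin.val (congrArg (· - u) h)
  simp only [add_sub_cancel_left, sub_self] at h0
  rw [Fin.val_natCast, Fin.val_zero, Nat.mod_eq_of_lt h2] at h0
  omega

lemma conflict {k : ℕ} {c : Fin (m + 3) → ℕ}
    (hc : IsPackingColoring (cycleGraph (m + 3)) k c) {u v : Fin (m + 3)} (d : ℕ)
    (hd : 0 < d) (hdm : d < m + 3) (he : v = u + (d : Fin (m + 3)))
    (hcd : d ≤ c u) (hcol : c u = c v) : False := by
  have hne : u ≠ v := by rw [he]; exact (shift_ne u hd hdm).symm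
  have h2 := hc.2 u v hne hcol
  have h3 : (cycleGraph (m + 3)).edist u v ≤ (d : ℕ∞) := he ▸ edist_shift u d
  exact absurd (lt_of_lt_of_le h2 h3) (not_lt.mpr (by exact_mod_cast hcd))

lemma three_le {k : ℕ} {c : Fin (m + 3) → ℕ}
    (hc : IsPackingColoring (cycleGraph (m + 3)) k c) : 3 ≤ k := by
  by_contra hk
  push_neg at hk
  have colors : ∀ v, c v = 1 ∨ c v = 2 := by
    intro v; have := hc.1 v; omega
  have no2 : ∀ w : Fin (m + 3), c w = 2 → False := by
    intro w hw
    have hw1 : c (w + 1) = 1 := by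
      rcases colors (w + 1) with h | h
      · exact h
      · exact absurd (conflict hc (u := w) (v := w + 1) 1 (by omega) (by omega)
          (by push_cast; ring) (by omega) (by omega)) id
    have hw2 : c (w + 2) = 1 := by
      rcases colors (w + 2) with h | h
      · exact h
      · exact absurd (conflict hc (u := w) (v := w + 2) 2 (by omega) (by omega)
          (by push_cast; ring) (by omega) (by omega)) id
    exact conflict hc (u := w + 1) (v := w + 2) 1 (by omega) (by omega)
      (by push_cast; ring) (by omega) (by omega)
  have h0 : c 0 = 1 := by
    rcases colors 0 with h | h
    · exact h
    · exact absurd (no2 0 h) id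
  have h1 : c 1 = 1 := by
    rcases colors 1 with h | h
    · exact h
    · exact absurd (no2 1 h) id
  exact conflict hc (u := 0) (v := 1) 1 (by omega) (by omega)
    (by push_cast; ring) (by omega) (by omega)

lemma four_le {k : ℕ} {c : Fin (m + 3) → ℕ} (hm : 2 ≤ m) (hn4 : ¬ 4 ∣ (m + 3))
    (hc : IsPackingColoring (cycleGraph (m + 3)) k c) : 4 ≤ k := by
  by_contra hk
  push_neg at hk
  have colors : ∀ v, c v = 1 ∨ c v = 2 ∨ c v = 3 := by
    intro v; have := hc.1 v; omega
  -- no two adjacent vertices may have equal colors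
  have nadj : ∀ v : Fin (m + 3), c v = c (v + 1) → False := by
    intro v h
    exact conflict hc (u := v) (v := v + 1) 1 (by omega) (by omega)
      (by push_cast; ring) (by have := hc.1 v; omega) h
  -- step1 : after a non-1 vertex comes a 1
  have step1 : ∀ w : Fin (m + 3), c (w + 2) ≠ 1 → c (w + 3) = 1 := by
    intro w h2 
    by_contra h3
    rcases colors (w + 2) with ha | ha | ha
    · exact h2 ha
    · rcases colors (w + 3) with hb | hb | hb
      · exact h3 hb
      · -- (2,2)
        exact conflict hc (u := w + 2) (v := w + 3) 1 (by omega) (by omega)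
          (by push_cast; ring) (by omega) (by omega)
      · -- (2,3) : look backwards
        have hw1 : c (w + 1) = 1 := by
          rcases colors (w + 1) with h | h | h
          · exact h
          · exact absurd (conflict hc (u := w + 1) (v := w + 2) 1 (by omega)
              (by omega) (by push_cast; ring) (by omega) (by omega)) id
          · exact absurd (conflict hc (u := w + 1) (v := w + 3) 2 (by omega)
              (by omega) (by push_cast; ring) (by omega) (by omega)) id
        rcases colors w with h | h | h
        · exact conflict hc (u := w) (v := w + 1) 1 (by omega) (by omega)
            (by push_cast; ring) (by omega) (by omega)
        · exact conflict hc (u := w) (v := w + 2) 2 (by omega) (by omega)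
            (by push_cast; ring) (by omega) (by omega)
        · exact conflict hc (u := w) (v := w + 3) 3 (by omega) (by omega)
            (by push_cast; ring) (by omega) (by omega)
    · rcases colors (w + 3) with hb | hb | hb
      · exact h3 hb
      · -- (3,2) : look forwards
        have hw4 : c (w + 4) = 1 := by
          rcases colors (w + 4) with h | h | h
          · exact h
          · exact absurd (conflict hc (u := w + 3) (v := w + 4) 1 (by omega)
              (by omega) (by push_cast; ring) (by omega) (by omega)) id
          · exact absurd (conflict hc (u := w + 2) (v := w + 4) 2 (by omega)
              (by omega) (by push_cast; ring) (by omega) (by omega)) id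
        rcases colors (w + 5) with h | h | h
        · exact conflict hc (u := w + 4) (v := w + 5) 1 (by omega) (by omega)
            (by push_cast; ring) (by omega) (by omega)
        · exact conflict hc (u := w + 3) (v := w + 5) 2 (by omega) (by omega)
            (by push_cast; ring) (by omega) (by omega)
        · exact conflict hc (u := w + 2) (v := w + 5) 3 (by omega) (by omega)
            (by push_cast; ring) (by omega) (by omega)
      · -- (3,3)
        exact conflict hc (u := w + 2) (v := w + 3) 1 (by omega) (by omega)
          (by push_cast; ring) (by omega) (by omega)
  have step1' : ∀ v : Fin (m + 3), c v ≠ 1 → c (v + 1) = 1 := by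
    intro v hv
    have := step1 (v - 2)
    rw [show (v - 2) + 2 = v by ring, show (v - 2) + 3 = v + 1 by ring] at this
    exact this hv
  have step2 : ∀ v : Fin (m + 3), c v = 1 → c (v + 1) ≠ 1 := by
    intro v hv h
    exact nadj v (by omega)
  -- parity: n is even
  obtain ⟨v0, hv0⟩ : ∃ v0 : Fin (m + 3), c v0 = 1 := by
    rcases colors 0 with h | h | h
    · exact ⟨0, h⟩
    · exact ⟨0 + 1, step1' 0 (by omega)⟩
    · exact ⟨0 + 1, step1' 0 (by omega)⟩
  have parity : ∀ j : ℕ, (c (v0 + (j : Fin (m + 3))) = 1 ↔ j % 2 = 0) := by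
    intro j
    induction j with
    | zero => simpa using hv0
    | succ j ih =>
      have e : v0 + ((j + 1 : ℕ) : Fin (m + 3)) = (v0 + (j : Fin (m + 3))) + 1 := by
        push_cast; ring
      have A := step1' (v0 + (j : Fin (m + 3)))
      have B := step2 (v0 + (j : Fin (m + 3)))
      rw [e]
      constructor
      · intro h
        by_contra hj
        have hj2 : j % 2 = 0 := by omega
        exact B (ih.mpr hj2) h
      · intro h
        have hj2 : j % 2 ≠ 0 := by omega
        exact A (fun hh => hj2 (ih.mp hh))
  have heven : (m + 3) % 2 = 0 := by
    have := parity (m + 3)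
    rw [Fin.natCast_self, add_zero] at this
    exact this.mp hv0
  -- mod 4 structure
  have ts : ∀ v : Fin (m + 3), c v ≠ 1 → (c (v + 2) ≠ 1 ∧ c (v + 2) ≠ c v) := by
    intro v hv
    have h1 : c (v + 1) = 1 := step1' v hv
    have h2 : c (v + 2) ≠ 1 := by
      have := step2 (v + 1) h1
      rw [show (v + 1) + 1 = v + 2 by ring] at this
      exact this
    refine ⟨h2, fun heq => ?_⟩
    exact conflict hc (u := v) (v := v + 2) 2 (by omega) (by omega)
      (by push_cast; ring) (by rcases colors v with h | h | h <;> omega) heq.symm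
  obtain ⟨v2, hv2⟩ : ∃ v2 : Fin (m + 3), c v2 ≠ 1 := by
    refine ⟨v0 + 1, step2 v0 hv0⟩
  have claim2 : ∀ j : ℕ, c (v2 + ((2 * j : ℕ) : Fin (m + 3))) ≠ 1 ∧
      (c (v2 + ((2 * j : ℕ) : Fin (m + 3))) = c v2 ↔ j % 2 = 0) := by
    intro j
    induction j with
    | zero => simpa using hv2
    | succ j ih =>
      have e : v2 + ((2 * (j + 1) : ℕ) : Fin (m + 3)) =
          (v2 + ((2 * j : ℕ) : Fin (m + 3))) + 2 := by
        push_cast; ring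
      obtain ⟨A, B⟩ := ts (v2 + ((2 * j : ℕ) : Fin (m + 3))) ih.1
      rw [e]
      have c1 := colors (v2 + ((2 * j : ℕ) : Fin (m + 3)))
      have c2 := colors ((v2 + ((2 * j : ℕ) : Fin (m + 3))) + 2)
      have c3 := colors v2
      have ih2 := ih.2
      constructor
      · exact A
      · omega
  obtain ⟨t, ht⟩ : ∃ t, m + 3 = 2 * t := ⟨(m + 3) / 2, by omega⟩
  have := (claim2 t).2
  rw [← ht, Fin.natCast_self, add_zero] at this
  have : t % 2 = 0 := this.mp rfl
  exact hn4 (by omega)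

end PackAux

open PackAux in
/-- packing chromatic number of cycles. -/
theorem stmt_1 (n : ℕ) (hn : 3 ≤ n) :
    packingChromaticNumber (SimpleGraph.cycleGraph n) =
      if n = 3 ∨ 4 ∣ n then 3 else 4 := by
  obtain ⟨m, rfl⟩ : ∃ m, n = m + 3 := ⟨n - 3, by omega⟩
  rw [packingChromaticNumber]
  by_cases hcond : m + 3 = 3 ∨ 4 ∣ (m + 3)
  · rw [if_pos hcond]
    have mem3 : 3 ∈ {k | ∃ c : Fin (m + 3) → ℕ,
        IsPackingColoring (cycleGraph (m + 3)) k c} := by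
      rcases hcond with h3 | h4
      · -- n = 3 : all colors distinct
        have hm : m = 0 := by omega
        subst hm
        refine ⟨fun v => v.val + 1, fun v => ?_, ?_⟩
        · have := v.isLt
          dsimp only
          omega
        · intro u v hne hcol
          dsimp only at hcol
          exact absurd (Fin.ext (by omega : u.val = v.val)) hne
      · -- 4 ∣ n : pattern 1 2 1 3
        refine ⟨fun v => if v.val % 4 = 1 then 2 else if v.val % 4 = 3 then 3 else 1,
          fun v => by dsimp only; split_ifs <;> omega, ?_⟩
        intro u v hne hcol
        refine lt_of_lt_of_le ?_ (le_edist u v)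
        rw [Nat.cast_lt]
        have hval : u.val ≠ v.val := fun h => hne (Fin.ext h)
        have hu := u.isLt; have hv := v.isLt
        dsimp only at hcol ⊢
        rw [cd, sub_val, sub_val]
        split_ifs at hcol ⊢ <;> omega
    refine le_antisymm (Nat.sInf_le mem3) ?_
    obtain ⟨c, hc⟩ := Nat.sInf_mem (⟨3, mem3⟩ : Set.Nonempty _)
    exact three_le hc
  · rw [if_neg hcond]
    push_neg at hcond
    have hm : 2 ≤ m := by
      have h1 := hcond.1
      have h2 := hcond.2
      omega
    have mem4 : 4 ∈ {k | ∃ c : Fin (m + 3) → ℕ,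
        IsPackingColoring (cycleGraph (m + 3)) k c} := by
      refine ⟨fun v => if v.val = m + 2 then 4 else
        if v.val % 4 = 1 then 2 else if v.val % 4 = 3 then 3 else 1,
        fun v => by dsimp only; split_ifs <;> omega, ?_⟩
      intro u v hne hcol
      refine lt_of_lt_of_le ?_ (le_edist u v)
      rw [Nat.cast_lt]
      have hval : u.val ≠ v.val := fun h => hne (Fin.ext h)
      have hu := u.isLt; have hv := v.isLt
      dsimp only at hcol ⊢
      rw [cd, sub_val, sub_val]
      split_ifs at hcol ⊢ <;> omega
    refine le_antisymm (Nat.sInf_le mem4) ?_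
    obtain ⟨c, hc⟩ := Nat.sInf_mem (⟨4, mem4⟩ : Set.Nonempty _)
    exact four_le hm hcond.2 hc
end

section
/- If m ≥ 1 and G is a connected graph with at least three vertices, then ω(G) + 1 ≤ χ_ρ(FSSD_m(G)) ≤ χ_ρ(G) + 1, where ω(G) is the clique number of G. -/
open SimpleGraph

section helpers
variable {V : Type*} {G : SimpleGraph V} {m : ℕ}

lemma fssd_adj_inl_inr {u : V} {e : G.edgeSet} {i : Fin m}
    (h : u ∈ (e : Sym2 V)) : (FSSD G m).Adj (Sum.inl u) (Sum.inr (e, i)) := h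

lemma fssd_not_adj_inr {e f : G.edgeSet × Fin m} :
    ¬ (FSSD G m).Adj (Sum.inr e) (Sum.inr f) := fun h => h

/-- subdivision vertex of an edge -/
def subv (G : SimpleGraph V) (m : ℕ) {u w : V} (h : G.Adj u w) (i : Fin m) :
    V ⊕ (G.edgeSet × Fin m) :=
  Sum.inr (⟨s(u, w), G.mem_edgeSet.mpr h⟩, i)

lemma adj_subv_mem {x a b : V} (h : G.Adj a b) (i : Fin m) (hx : x ∈ s(a, b)) :
    (FSSD G m).Adj (Sum.inl x) (subv G m h i) := fssd_adj_inl_inr hx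

lemma adj_subv_left {u w : V} (h : G.Adj u w) (i : Fin m) :
    (FSSD G m).Adj (Sum.inl u) (subv G m h i) :=
  adj_subv_mem h i (Sym2.mem_mk_left u w)

lemma adj_subv_right {u w : V} (h : G.Adj u w) (i : Fin m) :
    (FSSD G m).Adj (Sum.inl w) (subv G m h i) :=
  adj_subv_mem h i (Sym2.mem_mk_right u w)

lemma inl_ne_subv {x a b : V} (h : G.Adj a b) (i : Fin m) :
    (Sum.inl x : V ⊕ (G.edgeSet × Fin m)) ≠ subv G m h i := by simp [subv]

lemma subv_ne {a b a' b' : V} (h : G.Adj a b) (h' : G.Adj a' b') {i i' : Fin m}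
    (hs : s(a, b) ≠ s(a', b')) : subv G m h i ≠ subv G m h' i' := by
  intro heq
  apply hs
  have := heq
  simp only [subv, Sum.inr.injEq, Prod.mk.injEq, Subtype.mk.injEq] at this
  exact this.1

variable {W : Type*} {H : SimpleGraph W}

lemma edist_le_one {x y : W} (h : H.Adj x y) : H.edist x y ≤ ((1 : ℕ) : ℕ∞) := by
  exact_mod_cast (edist_eq_one_iff_adj.mpr h).le

lemma edist_le_two {x y z : W} (h1 : H.Adj x y) (h2 : H.Adj y z) :
    H.edist x z ≤ ((2 : ℕ) : ℕ∞) := by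
  calc H.edist x z ≤ H.edist x y + H.edist y z := SimpleGraph.edist_triangle
  _ ≤ ((1 : ℕ) : ℕ∞) + ((1 : ℕ) : ℕ∞) := add_le_add (edist_le_one h1) (edist_le_one h2)
  _ = ((2 : ℕ) : ℕ∞) := by push_cast; norm_num

lemma edist_le_three {x y z t : W} (h1 : H.Adj x y) (h2 : H.Adj y z) (h3 : H.Adj z t) :
    H.edist x t ≤ ((3 : ℕ) : ℕ∞) := by
  calc H.edist x t ≤ H.edist x z + H.edist z t := SimpleGraph.edist_triangle
  _ ≤ ((2 : ℕ) : ℕ∞) + ((1 : ℕ) : ℕ∞) := add_le_add (edist_le_two h1 h2) (edist_le_one h3)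
  _ = ((3 : ℕ) : ℕ∞) := by push_cast; norm_num

lemma edist_le_four {x y z t s : W} (h1 : H.Adj x y) (h2 : H.Adj y z) (h3 : H.Adj z t)
    (h4 : H.Adj t s) : H.edist x s ≤ ((4 : ℕ) : ℕ∞) := by
  calc H.edist x s ≤ H.edist x t + H.edist t s := SimpleGraph.edist_triangle
  _ ≤ ((3 : ℕ) : ℕ∞) + ((1 : ℕ) : ℕ∞) := add_le_add (edist_le_three h1 h2 h3) (edist_le_one h4)
  _ = ((4 : ℕ) : ℕ∞) := by push_cast; norm_num

lemma conflict {k : ℕ} {c : W → ℕ} (hc : IsPackingColoring H k c) {x y : W}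
    (hxy : x ≠ y) (hcol : c x = c y) (hd : H.edist x y ≤ (c x : ℕ∞)) : False :=
  absurd (hc.2 x y hxy hcol) (not_lt.mpr hd)

lemma conflict_nat {k : ℕ} {c : W → ℕ} (hc : IsPackingColoring H k c) {x y : W}
    (hxy : x ≠ y) (hcol : c x = c y) {n : ℕ} (hd : H.edist x y ≤ (n : ℕ∞))
    (hn : n ≤ c x) : False :=
  conflict hc hxy hcol (hd.trans (by exact_mod_cast hn))

lemma exists_packing_coloring (W : Type*) [Finite W] (H : SimpleGraph W) :
    ∃ k c, IsPackingColoring H k c := by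
  obtain ⟨n, ⟨f⟩⟩ := Finite.exists_equiv_fin W
  refine ⟨n, fun x => (f x : ℕ) + 1, fun x => ⟨by simp, ?_⟩,
    fun u v huv hcol => absurd ?_ huv⟩
  · exact Nat.succ_le_of_lt (f x).2
  · apply f.injective
    simp only at hcol
    exact Fin.ext (by omega)

lemma exists_optimal_coloring (W : Type*) [Finite W] (H : SimpleGraph W) :
    ∃ c, IsPackingColoring H (packingChromaticNumber H) c :=
  Nat.sInf_mem (exists_packing_coloring W H)

lemma walk_ge (n : ℕ) : ∀ (u v : V) (p : (FSSD G m).Walk (Sum.inl u) (Sum.inl v)),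
    p.length = n → 2 * G.edist u v ≤ (n : ℕ∞) := by
  induction n using Nat.strong_induction_on with
  | _ n ih =>
    intro u v p hn
    cases p with
    | nil => simp
    | @cons _ x _ h q =>
      rcases x with x | ⟨e, i⟩
      · exact absurd h (fun h => h)
      · have hu : u ∈ (e : Sym2 V) := h
        cases q with
        | @cons _ y _ h2 r =>
          rcases y with w | f
          · have hw : w ∈ (e : Sym2 V) := h2
            have hlen : r.length + 2 = n := by simpa [Nat.add_assoc] using hn
            have hIH : 2 * G.edist w v ≤ (r.length : ℕ∞) :=
              ih r.length (by omega) w v r rfl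
            have huw : G.edist u w ≤ 1 := by
              rcases eq_or_ne u w with rfl | hne
              · simp
              · have : (e : Sym2 V) = s(u, w) := (Sym2.mem_and_mem_iff hne).mp ⟨hu, hw⟩
                have hadj : G.Adj u w := G.mem_edgeSet.mp (this ▸ e.2)
                exact (edist_eq_one_iff_adj.mpr hadj).le
            calc 2 * G.edist u v ≤ 2 * (G.edist u w + G.edist w v) :=
                  mul_le_mul_right SimpleGraph.edist_triangle 2
              _ = 2 * G.edist u w + 2 * G.edist w v := by ring
              _ ≤ 2 * 1 + (r.length : ℕ∞) := add_le_add (mul_le_mul_right huw 2) hIH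
              _ = ((r.length + 2 : ℕ) : ℕ∞) := by push_cast; ring
              _ = (n : ℕ∞) := by rw [hlen]
          · exact absurd h2 (fun h => h)

lemma edist_inl_inl (u v : V) :
    2 * G.edist u v ≤ (FSSD G m).edist (Sum.inl u) (Sum.inl v) :=
  le_iInf fun p => walk_ge p.length u v p rfl

end helpers

section lower
variable {V : Type*} [Fintype V] {G : SimpleGraph V} {m : ℕ}

theorem lower_core (hG : G.Connected) (hV : 3 ≤ Fintype.card V) (hm : 0 < m)
    {k : ℕ} {c : V ⊕ (G.edgeSet × Fin m) → ℕ}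
    (hc : IsPackingColoring (FSSD G m) k c) : G.cliqueNum + 1 ≤ k := by
  classical
  by_contra hk
  obtain ⟨Q, hQ⟩ := G.exists_isNClique_cliqueNum
  obtain ⟨ω, hωdef⟩ : ∃ w, G.cliqueNum = w := ⟨_, rfl⟩
  rw [hωdef] at hk hQ
  have hkω : k ≤ ω := by omega
  have hQadj : ∀ {a b : V}, a ∈ Q → b ∈ Q → a ≠ b → G.Adj a b := fun ha hb hne =>
    hQ.1 (Finset.mem_coe.mpr ha) (Finset.mem_coe.mpr hb) hne
  have hQcard : Q.card = ω := hQ.2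
  -- ω ≥ 2
  have hedge : ∃ x y, G.Adj x y := by
    obtain ⟨a, b, hab⟩ := Fintype.exists_pair_of_one_lt_card (α := V) (by omega)
    obtain ⟨p⟩ := hG.preconnected a b
    cases p with
    | nil => exact absurd rfl hab
    | cons h _ => exact ⟨_, _, h⟩
  have hω2 : 2 ≤ ω := by
    obtain ⟨x, y, hxy⟩ := hedge
    have hcl : G.IsClique (({x, y} : Finset V) : Set V) := by
      simp only [Finset.coe_insert, Finset.coe_singleton]
      exact SimpleGraph.isClique_pair.mpr fun _ => hxy
    have hcard : ({x, y} : Finset V).card = 2 := Finset.card_pair hxy.ne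
    calc 2 = ({x, y} : Finset V).card := hcard.symm
    _ ≤ ω := hωdef ▸ IsClique.card_le_cliqueNum (tc := hcl)
  have hcol_lb : ∀ x, 1 ≤ c x := fun x => (hc.1 x).1
  have hcol_ub : ∀ x, c x ≤ k := fun x => (hc.1 x).2
  let i0 : Fin m := ⟨0, hm⟩
  -- subdivision vertices next to a color-1 vertex have color ≥ 2
  have sub_ge2 : ∀ {x z : V} (h : G.Adj x z) (i : Fin m), c (Sum.inl x) = 1 →
      2 ≤ c (subv G m h i) := by
    intro x z h i hx
    rcases Nat.lt_or_ge (c (subv G m h i)) 2 with hlt | hge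
    · exfalso
      have h1 : c (subv G m h i) = 1 := by have := hcol_lb (subv G m h i); omega
      exact conflict_nat hc (inl_ne_subv h i) (hx.trans h1.symm)
        (edist_le_one (adj_subv_left h i)) (by omega)
    · exact hge
  -- two subdivision vertices sharing an endpoint, with color ≥ 2, have different colors
  have two_subs : ∀ {x a b a' b' : V} (h : G.Adj a b) (h' : G.Adj a' b') {i j : Fin m},
      x ∈ s(a, b) → x ∈ s(a', b') → s(a, b) ≠ s(a', b') → 2 ≤ c (subv G m h i) →
      c (subv G m h i) = c (subv G m h' j) → False := by
    intro x a b a' b' h h' i j hx hx' hs h2 hcc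
    exact conflict_nat hc (subv_ne h h' hs) hcc
      (edist_le_two (adj_subv_mem h i hx).symm (adj_subv_mem h' j hx')) h2
  -- Step 1: some clique vertex has color 1
  have step1 : ∃ u ∈ Q, c (Sum.inl u) = 1 := by
    by_contra hno
    push_neg at hno
    have hinj : Set.InjOn (fun a => c (Sum.inl a)) ↑Q := by
      intro a ha b hb hab
      have hab' : c (Sum.inl a) = c (Sum.inl b) := hab
      by_contra hne
      have hadj := hQadj (Finset.mem_coe.mp ha) (Finset.mem_coe.mp hb) hne
      refine conflict_nat hc (x := Sum.inl a) (y := Sum.inl b) (by simp [hne]) hab'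
        (edist_le_two (adj_subv_left hadj i0) (adj_subv_right hadj i0).symm) ?_
      have := hcol_lb (Sum.inl a)
      have := hno a (Finset.mem_coe.mp ha)
      omega
    have hmaps : ∀ a ∈ Q, c (Sum.inl a) ∈ Finset.Icc 2 ω := by
      intro a ha
      have := hno a ha
      have := hcol_lb (Sum.inl a)
      have h2 := (hcol_ub (Sum.inl a)).trans hkω
      simp only [Finset.mem_Icc]
      omega
    have := Finset.card_le_card_of_injOn (fun a => c (Sum.inl a)) hmaps hinj
    rw [hQcard, Nat.card_Icc] at this
    omega
  obtain ⟨u, huQ, hu1⟩ := step1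
  -- star surjectivity at any color-1 clique vertex
  have star_surj : ∀ u₀ ∈ Q, c (Sum.inl u₀) = 1 → ∀ j, 2 ≤ j → j ≤ ω →
      ∃ w ∈ Q.erase u₀, ∃ h : G.Adj u₀ w, c (subv G m h i0) = j := by
    intro u₀ hu₀ hu₀1 j hj2 hjω
    have hadj : ∀ w ∈ Q.erase u₀, G.Adj u₀ w := fun w hw =>
      hQadj hu₀ (Finset.mem_of_mem_erase hw) (Ne.symm (Finset.ne_of_mem_erase hw))
    have key := Finset.surj_on_of_inj_on_of_card_le
      (s := Q.erase u₀) (t := Finset.Icc 2 ω)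
      (fun w hw => c (subv G m (hadj w hw) i0))
      (fun w hw => by
        simp only [Finset.mem_Icc]
        exact ⟨sub_ge2 (hadj w hw) i0 hu₀1, (hcol_ub _).trans hkω⟩)
      (fun a₁ a₂ ha₁ ha₂ heq => by
        by_contra hne
        refine two_subs (hadj a₁ ha₁) (hadj a₂ ha₂) (x := u₀)
          (Sym2.mem_mk_left _ _) (Sym2.mem_mk_left _ _) ?_
          (sub_ge2 (hadj a₁ ha₁) i0 hu₀1) heq
        have h1 : a₁ ≠ u₀ := Finset.ne_of_mem_erase ha₁
        have h2 : a₂ ≠ u₀ := Finset.ne_of_mem_erase ha₂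
        simp only [Ne, Sym2.eq_iff]
        push_neg
        constructor
        · intro _; exact hne
        · intro h; exact absurd h.symm h2)
      (by
        rw [Nat.card_Icc, Finset.card_erase_of_mem hu₀, hQcard]
        omega)
    obtain ⟨w, hw, hjw⟩ := key j (Finset.mem_Icc.mpr ⟨hj2, hjω⟩)
    exact ⟨w, hw, hadj w hw, hjw.symm⟩
  -- every other clique vertex has color ≤ 2
  have cl_le2 : ∀ w ∈ Q.erase u, c (Sum.inl w) ≤ 2 := by
    intro w hw
    by_contra hgt
    have hj3 : 3 ≤ c (Sum.inl w) := by omega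
    have hjω : c (Sum.inl w) ≤ ω := (hcol_ub _).trans hkω
    obtain ⟨w', hw', h', hcw'⟩ := star_surj u huQ hu1 (c (Sum.inl w)) (by omega) hjω
    have hadj_uw : G.Adj u w :=
      hQadj huQ (Finset.mem_of_mem_erase hw) (Ne.symm (Finset.ne_of_mem_erase hw))
    exact conflict_nat hc (inl_ne_subv h' i0) hcw'.symm
      (edist_le_three (adj_subv_right hadj_uw i0) (adj_subv_left hadj_uw i0).symm
        (adj_subv_left h' i0)) hj3
  -- at most one clique vertex of color 2
  have one_two : ∀ w ∈ Q, ∀ w' ∈ Q, w ≠ w' → c (Sum.inl w) = 2 → c (Sum.inl w') = 2 → False := by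
    intro w hw w' hw' hne h2 h2'
    have hadj := hQadj hw hw' hne
    exact conflict_nat hc (by simp [hne]) (h2.trans h2'.symm)
      (edist_le_two (adj_subv_left hadj i0) (adj_subv_right hadj i0).symm) (by omega)
  rcases (show ω = 2 ∨ ω = 3 ∨ 4 ≤ ω by omega) with hω | hω | hω
  -- Case ω = 2
  · have hcard1 : (Q.erase u).card = 1 := by
      rw [Finset.card_erase_of_mem huQ, hQcard, hω]
    obtain ⟨v, hv⟩ := Finset.card_eq_one.mp hcard1
    have hvmem : v ∈ Q.erase u := by rw [hv]; exact Finset.mem_singleton_self v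
    have hvu : v ≠ u := Finset.ne_of_mem_erase hvmem
    have hadj : G.Adj u v := hQadj huQ (Finset.mem_of_mem_erase hvmem) (Ne.symm hvu)
    have hsv2 : c (subv G m hadj i0) = 2 := by
      have := sub_ge2 hadj i0 hu1
      have := (hcol_ub (subv G m hadj i0)).trans hkω
      omega
    have hv1 : c (Sum.inl v) = 1 := by
      by_contra hne
      have hv2 : c (Sum.inl v) = 2 := by
        have := cl_le2 v hvmem; have := hcol_lb (Sum.inl v); omega
      exact conflict_nat hc (inl_ne_subv hadj i0) (hv2.trans hsv2.symm)
        (edist_le_one (adj_subv_right hadj i0)) (by omega)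
    have uniq : ∀ x : V, c (Sum.inl x) = 1 → ∀ z z', G.Adj x z → G.Adj x z' → z = z' := by
      intro x hx z z' h h'
      by_contra hne
      have hz2 : c (subv G m h i0) = 2 := by
        have := sub_ge2 h i0 hx; have := (hcol_ub (subv G m h i0)).trans hkω; omega
      have hz2' : c (subv G m h' i0) = 2 := by
        have := sub_ge2 h' i0 hx; have := (hcol_ub (subv G m h' i0)).trans hkω; omega
      refine two_subs h h' (x := x) (Sym2.mem_mk_left _ _) (Sym2.mem_mk_left _ _) ?_
        (by omega) (hz2.trans hz2'.symm)
      simp only [Ne, Sym2.eq_iff]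
      push_neg
      exact ⟨fun _ => hne, fun hxz' => absurd hxz' h'.ne⟩
    have closed : ∀ a : V, (a = u ∨ a = v) → ∀ b, G.Adj a b → (b = u ∨ b = v) := by
      rintro a (rfl | rfl) b hb
      · exact Or.inr (uniq _ hu1 b v hb hadj)
      · exact Or.inl (uniq _ hv1 b u hb hadj.symm)
    have reach : ∀ (x y : V) (p : G.Walk x y), (x = u ∨ x = v) → (y = u ∨ y = v) := by
      intro x y p
      induction p with
      | nil => exact id
      | cons h q ih => exact fun hx => ih (closed _ hx _ h)
    obtain ⟨z, hz1, hz2⟩ : ∃ z : V, z ≠ u ∧ z ≠ v := by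
      by_contra hno
      push_neg at hno
      have hsub : (Finset.univ : Finset V) ⊆ {u, v} := by
        intro z _
        rcases eq_or_ne z u with rfl | hzu
        · simp
        · simp [hno z hzu]
      have hle := Finset.card_le_card hsub
      have h2' : ({u, v} : Finset V).card ≤ 2 :=
        (Finset.card_insert_le u {v}).trans (by simp)
      rw [Finset.card_univ] at hle
      omega
    obtain ⟨p⟩ := hG.preconnected u z
    rcases reach u z p (Or.inl rfl) with h | h
    · exact hz1 h
    · exact hz2 h
  -- Case ω = 3
  · have hcard2 : (Q.erase u).card = 2 := by
      rw [Finset.card_erase_of_mem huQ, hQcard, hω]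
    obtain ⟨v, w, hvw, hvwset⟩ := Finset.card_eq_two.mp hcard2
    have hvmem : v ∈ Q.erase u := by rw [hvwset]; simp
    have hwmem : w ∈ Q.erase u := by rw [hvwset]; simp
    have hvQ : v ∈ Q := Finset.mem_of_mem_erase hvmem
    have hwQ : w ∈ Q := Finset.mem_of_mem_erase hwmem
    obtain ⟨u', t, hu'mem, htmem, hu't, hu'1⟩ :
        ∃ u' t, u' ∈ Q.erase u ∧ t ∈ Q.erase u ∧ u' ≠ t ∧ c (Sum.inl u') = 1 := by
      by_cases hcv : c (Sum.inl v) = 1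
      · exact ⟨v, w, hvmem, hwmem, hvw, hcv⟩
      · have hcv2 : c (Sum.inl v) = 2 := by
          have := cl_le2 v hvmem; have := hcol_lb (Sum.inl v); omega
        have hcw1 : c (Sum.inl w) = 1 := by
          have hle := cl_le2 w hwmem
          have := hcol_lb (Sum.inl w)
          by_contra hne
          exact one_two v hvQ w hwQ hvw hcv2 (by omega)
        exact ⟨w, v, hwmem, hvmem, hvw.symm, hcw1⟩
    have hu'u : u' ≠ u := Finset.ne_of_mem_erase hu'mem
    have htu : t ≠ u := Finset.ne_of_mem_erase htmem
    have hu'Q := Finset.mem_of_mem_erase hu'mem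
    have htQ := Finset.mem_of_mem_erase htmem
    have h1 : G.Adj u u' := hQadj huQ hu'Q (Ne.symm hu'u)
    have h2 : G.Adj u t := hQadj huQ htQ (Ne.symm htu)
    have h3' : G.Adj u' t := hQadj hu'Q htQ hu't
    have ha2 : 2 ≤ c (subv G m h1 i0) := sub_ge2 h1 i0 hu1
    have hb2 : 2 ≤ c (subv G m h2 i0) := sub_ge2 h2 i0 hu1
    have hd2 : 2 ≤ c (subv G m h3' i0) := sub_ge2 h3' i0 hu'1
    have ha3 := (hcol_ub (subv G m h1 i0)).trans hkω
    have hb3 := (hcol_ub (subv G m h2 i0)).trans hkω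
    have hd3 := (hcol_ub (subv G m h3' i0)).trans hkω
    have hab : c (subv G m h1 i0) ≠ c (subv G m h2 i0) := by
      intro he
      refine two_subs h1 h2 (x := u) (Sym2.mem_mk_left _ _) (Sym2.mem_mk_left _ _) ?_ ha2 he
      simp only [Ne, Sym2.eq_iff]; push_neg
      exact ⟨fun _ => hu't, fun h => absurd h.symm htu⟩
    have had : c (subv G m h1 i0) ≠ c (subv G m h3' i0) := by
      intro he
      refine two_subs h1 h3' (x := u') (Sym2.mem_mk_right _ _) (Sym2.mem_mk_left _ _) ?_ ha2 he
      simp only [Ne, Sym2.eq_iff]; push_neg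
      exact ⟨fun h => absurd h (Ne.symm hu'u), fun h => absurd h (Ne.symm htu)⟩
    have hbd : c (subv G m h2 i0) ≠ c (subv G m h3' i0) := by
      intro he
      refine two_subs h2 h3' (x := t) (Sym2.mem_mk_right _ _) (Sym2.mem_mk_right _ _) ?_ hb2 he
      simp only [Ne, Sym2.eq_iff]; push_neg
      exact ⟨fun h => absurd h (Ne.symm hu'u), fun h => absurd h (Ne.symm htu)⟩
    omega
  -- Case 4 ≤ ω
  · have hcard3 : 3 ≤ (Q.erase u).card := by
      rw [Finset.card_erase_of_mem huQ, hQcard]; omega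
    obtain ⟨T, hTsub, hT3⟩ := Finset.exists_subset_card_eq hcard3
    obtain ⟨v₁, v₂, v₃, h12, h13, h23, hTset⟩ := Finset.card_eq_three.mp hT3
    have hm1 : v₁ ∈ Q.erase u := hTsub (by rw [hTset]; simp)
    have hm2 : v₂ ∈ Q.erase u := hTsub (by rw [hTset]; simp)
    have hm3 : v₃ ∈ Q.erase u := hTsub (by rw [hTset]; simp)
    obtain ⟨a, b, hamem, hbmem, hab, ha1, hb1⟩ :
        ∃ a b, a ∈ Q.erase u ∧ b ∈ Q.erase u ∧ a ≠ b ∧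
          c (Sum.inl a) = 1 ∧ c (Sum.inl b) = 1 := by
      have e1 := cl_le2 v₁ hm1
      have e2 := cl_le2 v₂ hm2
      have e3 := cl_le2 v₃ hm3
      have f1 := hcol_lb (Sum.inl v₁)
      have f2 := hcol_lb (Sum.inl v₂)
      have f3 := hcol_lb (Sum.inl v₃)
      by_cases q1 : c (Sum.inl v₁) = 1
      · by_cases q2 : c (Sum.inl v₂) = 1
        · exact ⟨v₁, v₂, hm1, hm2, h12, q1, q2⟩
        · have hv22 : c (Sum.inl v₂) = 2 := by omega
          have q3 : c (Sum.inl v₃) = 1 := by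
            by_contra qq
            exact one_two v₂ (Finset.mem_of_mem_erase hm2) v₃
              (Finset.mem_of_mem_erase hm3) h23 hv22 (by omega)
          exact ⟨v₁, v₃, hm1, hm3, h13, q1, q3⟩
      · have hv12 : c (Sum.inl v₁) = 2 := by omega
        have q2 : c (Sum.inl v₂) = 1 := by
          by_contra qq
          exact one_two v₁ (Finset.mem_of_mem_erase hm1) v₂
            (Finset.mem_of_mem_erase hm2) h12 hv12 (by omega)
        have q3 : c (Sum.inl v₃) = 1 := by
          by_contra qq
          exact one_two v₁ (Finset.mem_of_mem_erase hm1) v₃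
            (Finset.mem_of_mem_erase hm3) h13 hv12 (by omega)
        exact ⟨v₂, v₃, hm2, hm3, h23, q2, q3⟩
    obtain ⟨w, hwmem, hadjw, hcw⟩ := star_surj u huQ hu1 ω (by omega) le_rfl
    have force : ∀ y, y ∈ Q.erase u → c (Sum.inl y) = 1 → w = y := by
      intro y hy hy1
      obtain ⟨w', hw', hadjw', hcw'⟩ :=
        star_surj y (Finset.mem_of_mem_erase hy) hy1 ω (by omega) le_rfl
      by_contra hne
      have hyu : y ≠ u := Finset.ne_of_mem_erase hy
      have hsne : s(u, w) ≠ s(y, w') := by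
        simp only [Ne, Sym2.eq_iff]; push_neg
        exact ⟨fun h => absurd h (Ne.symm hyu), fun _ => hne⟩
      have hady : G.Adj u y := hQadj huQ (Finset.mem_of_mem_erase hy) (Ne.symm hyu)
      refine conflict_nat hc (subv_ne hadjw hadjw' hsne) (hcw.trans hcw'.symm)
        (edist_le_four (adj_subv_left hadjw i0).symm (adj_subv_left hady i0)
          (adj_subv_right hady i0).symm (adj_subv_left hadjw' i0)) ?_
      rw [hcw]; exact hω
    exact hab ((force a hamem ha1).symm.trans (force b hbmem hb1))

end lower

/-- `ω(G) + 1 ≤ χ_ρ(FSSD_m(G)) ≤ χ_ρ(G) + 1` for connected `G` with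
at least three vertices. -/
theorem stmt_2 {V : Type*} [Fintype V] (G : SimpleGraph V) (hG : G.Connected)
    (hV : 3 ≤ Fintype.card V) (m : ℕ) (hm : 1 ≤ m) :
    G.cliqueNum + 1 ≤ packingChromaticNumber (FSSD G m) ∧
    packingChromaticNumber (FSSD G m) ≤ packingChromaticNumber G + 1 := by
  constructor
  · obtain ⟨c, hc⟩ := exists_optimal_coloring _ (FSSD G m)
    exact lower_core hG hV hm hc
  · obtain ⟨c₀, h₀⟩ := exists_optimal_coloring V G
    apply Nat.sInf_le
    refine ⟨Sum.elim (fun v => c₀ v + 1) (fun _ => 1), ?_, ?_⟩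
    · rintro (v | e)
      · exact ⟨by simp, by simpa using (h₀.1 v).2⟩
      · exact ⟨le_refl 1, by simp⟩
    · rintro (a | e) (b | f) hne hcol
      · simp only [Sum.elim_inl] at hcol ⊢
        have hab : a ≠ b := fun h => hne (by rw [h])
        have hlt : (c₀ a : ℕ∞) < G.edist a b := h₀.2 a b hab (by omega)
        have h1 : ((c₀ a + 1 : ℕ) : ℕ∞) ≤ G.edist a b := by
          push_cast
          exact Order.add_one_le_of_lt hlt
        calc ((c₀ a + 1 : ℕ) : ℕ∞) < ((2 * (c₀ a + 1) : ℕ) : ℕ∞) := by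
              exact_mod_cast (by omega : c₀ a + 1 < 2 * (c₀ a + 1))
          _ = 2 * ((c₀ a + 1 : ℕ) : ℕ∞) := by push_cast; ring
          _ ≤ 2 * G.edist a b := mul_le_mul_right h1 2
          _ ≤ (FSSD G m).edist (Sum.inl a) (Sum.inl b) := edist_inl_inl a b
      · simp only [Sum.elim_inl, Sum.elim_inr] at hcol
        have := (h₀.1 a).1
        omega
      · simp only [Sum.elim_inl, Sum.elim_inr] at hcol
        have := (h₀.1 b).1
        omega
      · simp only [Sum.elim_inr]
        have hnadj : ¬ (FSSD G m).Adj (Sum.inr e) (Sum.inr f) := fssd_not_adj_inr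
        have h0 : (0 : ℕ∞) < (FSSD G m).edist (Sum.inr e) (Sum.inr f) :=
          edist_pos_of_ne hne
        have h1 : (FSSD G m).edist (Sum.inr e) (Sum.inr f) ≠ 1 := fun h =>
          hnadj (edist_eq_one_iff_adj.mp h)
        have hge : (1 : ℕ∞) ≤ (FSSD G m).edist (Sum.inr e) (Sum.inr f) :=
          Order.one_le_iff_pos.mpr h0
        exact_mod_cast lt_of_le_of_ne hge (Ne.symm h1)
end

section
/- For any n ≥ 3 and m ≥ 1, the packing chromatic number of the finite super subdivision FSSD_m(K_n) of the complete graph K_n equals n + 1. -/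
open SimpleGraph

namespace Stmt3Aux

open SimpleGraph

abbrev GG (n m : ℕ) := FSSD (⊤ : SimpleGraph (Fin n)) m

lemma adj_edist_le_one {V : Type*} {G : SimpleGraph V} {u v : V} (h : G.Adj u v) :
    G.edist u v ≤ 1 := by
  simpa using edist_le h.toWalk

lemma one_lt_edist {V : Type*} {G : SimpleGraph V} {u v : V} (hne : u ≠ v)
    (hadj : ¬ G.Adj u v) : 1 < G.edist u v := by
  rcases lt_or_ge 1 (G.edist u v) with h | h
  · exact h
  · exact absurd (edist_eq_one_iff_adj.mp
      (le_antisymm h (Order.one_le_iff_pos.mpr (edist_pos_of_ne hne)))) hadj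

lemma rep {n : ℕ} (e : (⊤ : SimpleGraph (Fin n)).edgeSet) :
    ∃ a b : Fin n, a ≠ b ∧ (e : Sym2 (Fin n)) = s(a, b) := by
  obtain ⟨z, hz⟩ := e
  induction z using Sym2.ind with
  | _ a b => exact ⟨a, b, by simpa using hz, rfl⟩

/-- The canonical subdivision vertex on the edge `uv`. -/
def W {n m : ℕ} (hm : 0 < m) {u v : Fin n} (h : u ≠ v) :
    Fin n ⊕ ((⊤ : SimpleGraph (Fin n)).edgeSet × Fin m) :=
  Sum.inr (⟨s(u,v), by simpa using h⟩, ⟨0, hm⟩)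

lemma edist_mem₁ {n m : ℕ} {u : Fin n} {p : (⊤ : SimpleGraph (Fin n)).edgeSet × Fin m}
    (h : u ∈ (p.1 : Sym2 (Fin n))) : (GG n m).edist (Sum.inl u) (Sum.inr p) ≤ 1 :=
  adj_edist_le_one h

lemma edist_mem₂ {n m : ℕ} {u : Fin n} {p : (⊤ : SimpleGraph (Fin n)).edgeSet × Fin m}
    (h : u ∈ (p.1 : Sym2 (Fin n))) : (GG n m).edist (Sum.inr p) (Sum.inl u) ≤ 1 :=
  adj_edist_le_one h

lemma edist_inl_inl {n m : ℕ} (hm : 0 < m) {u v : Fin n} (h : u ≠ v) :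
    (GG n m).edist (Sum.inl u) (Sum.inl v) ≤ 2 := by
  have t := SimpleGraph.edist_triangle (G := GG n m) (u := Sum.inl u) (v := W hm h)
    (w := Sum.inl v)
  have h1 : (GG n m).edist (Sum.inl u) (W hm h) ≤ 1 :=
    edist_mem₁ (Sym2.mem_mk_left u v)
  have h2 : (GG n m).edist (W hm h) (Sum.inl v) ≤ 1 :=
    edist_mem₂ (Sym2.mem_mk_right u v)
  calc (GG n m).edist (Sum.inl u) (Sum.inl v) ≤ _ + _ := t
    _ ≤ 1 + 1 := add_le_add h1 h2
    _ = 2 := by norm_num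

lemma edist_inl_inr {n m : ℕ} (hm : 0 < m) (u : Fin n)
    (p : (⊤ : SimpleGraph (Fin n)).edgeSet × Fin m) :
    (GG n m).edist (Sum.inl u) (Sum.inr p) ≤ 3 := by
  obtain ⟨a, b, hab, he⟩ := rep p.1
  have hmem : a ∈ (p.1 : Sym2 (Fin n)) := by rw [he]; exact Sym2.mem_mk_left a b
  by_cases hua : u = a
  · subst hua
    exact le_trans (edist_mem₁ hmem) (by norm_num)
  · have t := SimpleGraph.edist_triangle (G := GG n m) (u := Sum.inl u) (v := Sum.inl a)
      (w := Sum.inr p)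
    calc (GG n m).edist (Sum.inl u) (Sum.inr p) ≤ _ + _ := t
      _ ≤ 2 + 1 := add_le_add (edist_inl_inl hm hua) (edist_mem₁ hmem)
      _ = 3 := by norm_num

lemma edist_inr_inr₄ {n m : ℕ} (hm : 0 < m)
    (p q : (⊤ : SimpleGraph (Fin n)).edgeSet × Fin m) :
    (GG n m).edist (Sum.inr p) (Sum.inr q) ≤ 4 := by
  obtain ⟨a, b, hab, he⟩ := rep p.1
  have hmem : a ∈ (p.1 : Sym2 (Fin n)) := by rw [he]; exact Sym2.mem_mk_left a b
  have t := SimpleGraph.edist_triangle (G := GG n m) (u := Sum.inr p) (v := Sum.inl a)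
    (w := Sum.inr q)
  calc (GG n m).edist (Sum.inr p) (Sum.inr q) ≤ _ + _ := t
    _ ≤ 1 + 3 := add_le_add (edist_mem₂ hmem) (edist_inl_inr hm a q)
    _ = 4 := by norm_num

lemma edist_inr_inr₂ {n m : ℕ} {p q : (⊤ : SimpleGraph (Fin n)).edgeSet × Fin m}
    (x : Fin n) (hx : x ∈ (p.1 : Sym2 (Fin n))) (hx' : x ∈ (q.1 : Sym2 (Fin n))) :
    (GG n m).edist (Sum.inr p) (Sum.inr q) ≤ 2 := by
  have t := SimpleGraph.edist_triangle (G := GG n m) (u := Sum.inr p) (v := Sum.inl x)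
    (w := Sum.inr q)
  calc (GG n m).edist (Sum.inr p) (Sum.inr q) ≤ _ + _ := t
    _ ≤ 1 + 1 := add_le_add (edist_mem₂ hx) (edist_mem₁ hx')
    _ = 2 := by norm_num

end Stmt3Aux

namespace Stmt3Aux

lemma no_packing (n m : ℕ) (hn : 3 ≤ n) (hm : 1 ≤ m)
    (c : Fin n ⊕ ((⊤ : SimpleGraph (Fin n)).edgeSet × Fin m) → ℕ) :
    ¬ IsPackingColoring (GG n m) n c := by
  rintro ⟨hc1, hc2⟩
  have hm' : 0 < m := hm
  -- basic conflict principle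
  have key : ∀ x y, x ≠ y → c x = c y → ∀ k : ℕ, (GG n m).edist x y ≤ (k : ℕ∞) → c x < k := by
    intro x y hxy hcc k hk
    exact_mod_cast lt_of_lt_of_le (hc2 x y hxy hcc) hk
  -- F2 : a vertex and an incident subdivision vertex get different colors
  have hF2 : ∀ (u : Fin n) (p : (⊤ : SimpleGraph (Fin n)).edgeSet × Fin m),
      u ∈ (p.1 : Sym2 (Fin n)) → c (Sum.inl u) ≠ c (Sum.inr p) := by
    intro u p hmem heq
    have h1 := key _ _ (fun h => by cases h) heq 1
      (by exact_mod_cast edist_mem₁ hmem)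
    have h2 := (hc1 (Sum.inl u)).1
    omega
  -- F1 : two distinct original vertices with the same color have color 1
  have hF1 : ∀ u v : Fin n, u ≠ v → c (Sum.inl u) = c (Sum.inl v) → c (Sum.inl u) = 1 := by
    intro u v h heq
    have h1 := key _ _ (fun he => h (Sum.inl.inj he)) heq 2
      (by exact_mod_cast edist_inl_inl hm' h)
    have h2 := (hc1 (Sum.inl u)).1
    omega
  -- F3 : an original vertex sharing a color with any subdivision vertex has color ≤ 2
  have hF3 : ∀ (u : Fin n) (p : (⊤ : SimpleGraph (Fin n)).edgeSet × Fin m),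
      c (Sum.inl u) = c (Sum.inr p) → c (Sum.inl u) ≤ 2 := by
    intro u p heq
    have h1 := key _ _ (fun h => by cases h) heq 3
      (by exact_mod_cast edist_inl_inr hm' u p)
    omega
  -- subdivision vertices on edges sharing an endpoint, with colors ≥ 2, differ in color
  have hdiff : ∀ {u1 v1 u2 v2 : Fin n} (h1 : u1 ≠ v1) (h2 : u2 ≠ v2) (x : Fin n),
      s(u1,v1) ≠ s(u2,v2) → x ∈ s(u1,v1) → x ∈ s(u2,v2) →
      2 ≤ c (W hm' h1) → c (W hm' h1) ≠ c (W hm' h2) := by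
    intro u1 v1 u2 v2 h1 h2 x hsne hx1 hx2 hge heq
    have hWne : W hm' h1 ≠ W hm' h2 := by
      intro hW
      exact hsne (congrArg (fun p => ((p.1 : (⊤ : SimpleGraph (Fin n)).edgeSet) : Sym2 (Fin n)))
        (Sum.inr.inj hW))
    have := key _ _ hWne heq 2 (by exact_mod_cast edist_inr_inr₂ x hx1 hx2)
    omega
  -- step 1 : some original vertex has color 1
  have step1 : ∃ u : Fin n, c (Sum.inl u) = 1 := by
    by_contra h
    push_neg at h
    have hinj : Function.Injective (fun u : Fin n => (⟨c (Sum.inl u) - 2, by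
        have h1 := (hc1 (Sum.inl u)).1
        have h2 := (hc1 (Sum.inl u)).2
        have h3 := h u
        omega⟩ : Fin (n-1))) := by
      intro u v huv
      by_contra hne
      have hval : c (Sum.inl u) - 2 = c (Sum.inl v) - 2 := congrArg Fin.val huv
      have h1u := (hc1 (Sum.inl u)).1
      have h1v := (hc1 (Sum.inl v)).1
      have h3u := h u
      have h3v := h v
      have heq : c (Sum.inl u) = c (Sum.inl v) := by omega
      exact h3u (hF1 u v hne heq)
    have := Fintype.card_le_of_injective _ hinj
    simp only [Fintype.card_fin] at this
    omega
  -- value range of subdivision vertices incident to a color-1 vertex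
  have hsubval : ∀ (u0 : Fin n), c (Sum.inl u0) = 1 → ∀ (x : Fin n) (h : u0 ≠ x),
      2 ≤ c (W hm' h) ∧ c (W hm' h) ≤ n := by
    intro u0 hu0 x h
    have h1 := (hc1 (W hm' h)).1
    have h2 := (hc1 (W hm' h)).2
    have h3 : c (Sum.inl u0) ≠ c (W hm' h) := hF2 u0 _ (Sym2.mem_mk_left u0 x)
    omega
  -- step 2 : the star of a color-1 vertex is surjective onto colors {2,…,n}
  have star_surj : ∀ u0 : Fin n, c (Sum.inl u0) = 1 → ∀ j : ℕ, 2 ≤ j → j ≤ n →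
      ∃ (x : Fin n) (h : u0 ≠ x), c (W hm' h) = j := by
    intro u0 hu0 j hj2 hjn
    have hinj2 : ∀ (x x' : Fin n) (h : u0 ≠ x) (h' : u0 ≠ x'),
        c (W hm' h) = c (W hm' h') → x = x' := by
      intro x x' h h' heq
      by_contra hne
      exact hdiff h h' u0 (by simp [Sym2.eq_iff]; tauto) (Sym2.mem_mk_left u0 x)
        (Sym2.mem_mk_left u0 x') (hsubval u0 hu0 x h).1 heq
    let Ψ : {x : Fin n // x ≠ u0} → Fin (n-1) := fun x =>
      ⟨c (W hm' (Ne.symm x.2)) - 2, by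
        have := hsubval u0 hu0 x.1 (Ne.symm x.2); omega⟩
    have hΨinj : Function.Injective Ψ := by
      intro a b hab
      have hv : c (W hm' (Ne.symm a.2)) - 2 = c (W hm' (Ne.symm b.2)) - 2 :=
        congrArg Fin.val hab
      have ha := (hsubval u0 hu0 a.1 (Ne.symm a.2)).1
      have hb := (hsubval u0 hu0 b.1 (Ne.symm b.2)).1
      exact Subtype.ext (hinj2 _ _ _ _ (by omega))
    have hcard : Fintype.card {x : Fin n // x ≠ u0} = Fintype.card (Fin (n-1)) := by
      simp [Fintype.card_subtype_compl]
    have hΨbij : Function.Bijective Ψ :=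
      (Fintype.bijective_iff_injective_and_card Ψ).2 ⟨hΨinj, hcard⟩
    obtain ⟨x, hx⟩ := hΨbij.2 ⟨j - 2, by omega⟩
    refine ⟨x.1, Ne.symm x.2, ?_⟩
    have hv : c (W hm' (Ne.symm x.2)) - 2 = j - 2 := congrArg Fin.val hx
    have := (hsubval u0 hu0 x.1 (Ne.symm x.2)).1
    omega
  -- step 3 : original vertices only use colors 1 and 2
  have step3 : ∀ z : Fin n, c (Sum.inl z) ≤ 2 := by
    intro z
    by_contra h
    push_neg at h
    obtain ⟨u0, hu0⟩ := step1
    obtain ⟨x, hx, hcx⟩ := star_surj u0 hu0 (c (Sum.inl z)) (by omega) (hc1 (Sum.inl z)).2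
    have := hF3 z _ hcx.symm
    omega
  -- step 4 : all original vertices, except possibly one, have color 1
  have step4 : ∃ y : Fin n, ∀ z, z ≠ y → c (Sum.inl z) = 1 := by
    by_cases h : ∃ z0, c (Sum.inl z0) ≠ 1
    · obtain ⟨z0, hz0⟩ := h
      refine ⟨z0, fun z hz => ?_⟩
      by_contra hz1
      have h2 : c (Sum.inl z) = 2 := by
        have := (hc1 (Sum.inl z)).1; have := step3 z; omega
      have h2' : c (Sum.inl z0) = 2 := by
        have := (hc1 (Sum.inl z0)).1; have := step3 z0; omega
      have := hF1 z z0 hz (by omega)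
      omega
    · push_neg at h
      exact ⟨⟨0, by omega⟩, fun z _ => h z⟩
  obtain ⟨y, hy⟩ := step4
  rcases Nat.lt_or_ge n 4 with h4 | h4
  · -- case n = 3
    have hcard : 1 < (Finset.univ.erase y).card := by
      rw [Finset.card_erase_of_mem (Finset.mem_univ y)]
      simp only [Finset.card_univ, Fintype.card_fin]
      omega
    obtain ⟨u, hu, v, hv, huv⟩ := Finset.one_lt_card.mp hcard
    have hu' : u ≠ y := Finset.ne_of_mem_erase hu
    have hv' : v ≠ y := Finset.ne_of_mem_erase hv
    have hcu := hy u hu'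
    have hcv := hy v hv'
    have hi := hsubval u hcu v huv
    have ha := hsubval u hcu y hu'
    have hb := hsubval v hcv y hv'
    have hia : c (W hm' huv) ≠ c (W hm' hu') :=
      hdiff huv hu' u (by simp [Sym2.eq_iff]; tauto) (Sym2.mem_mk_left u v)
        (Sym2.mem_mk_left u y) hi.1
    have hib : c (W hm' huv) ≠ c (W hm' hv') :=
      hdiff huv hv' v (by simp [Sym2.eq_iff]; tauto) (Sym2.mem_mk_right u v)
        (Sym2.mem_mk_left v y) hi.1
    have hab : c (W hm' hu') ≠ c (W hm' hv') :=
      hdiff hu' hv' y (by simp [Sym2.eq_iff]; tauto) (Sym2.mem_mk_right u y)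
        (Sym2.mem_mk_right v y) ha.1
    omega
  · -- case n ≥ 4
    have h4color : ∀ (u' v' : Fin n) (h : u' ≠ v'), c (Sum.inl u') = 1 →
        c (Sum.inl v') = 1 → c (W hm' h) = 4 := by
      intro u' v' h hcu' hcv'
      obtain ⟨x, hx, hcx⟩ := star_surj u' hcu' 4 (by omega) (by omega)
      obtain ⟨x', hx', hcx'⟩ := star_surj v' hcv' 4 (by omega) (by omega)
      by_cases hWW : W hm' hx = W hm' hx'
      · have hs : s(u', x) = s(v', x') :=
          congrArg (fun z => ((z.1 : (⊤ : SimpleGraph (Fin n)).edgeSet) : Sym2 (Fin n)))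
            (Sum.inr.inj hWW)
        rw [Sym2.eq_iff] at hs
        have hxv : x = v' := by
          rcases hs with ⟨h1, _⟩ | ⟨_, h2⟩
          · exact absurd h1 h
          · exact h2
        subst hxv
        exact hcx
      · have := key _ _ hWW (hcx.trans hcx'.symm) 4
          (by exact_mod_cast edist_inr_inr₄ hm' _ _)
        omega
    have hcard : 2 < (Finset.univ.erase y).card := by
      rw [Finset.card_erase_of_mem (Finset.mem_univ y)]
      simp only [Finset.card_univ, Fintype.card_fin]
      omega
    obtain ⟨u, hu, v, hv, w, hw, huv, huw, hvw⟩ := Finset.two_lt_card.mp hcard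
    have hcu := hy u (Finset.ne_of_mem_erase hu)
    have hcv := hy v (Finset.ne_of_mem_erase hv)
    have hcw := hy w (Finset.ne_of_mem_erase hw)
    have hA := h4color u v huv hcu hcv
    have hB := h4color u w huw hcu hcw
    have := hdiff huv huw u (by simp [Sym2.eq_iff]; tauto) (Sym2.mem_mk_left u v)
      (Sym2.mem_mk_left u w) (by omega)
    omega

end Stmt3Aux

namespace Stmt3Aux

lemma exists_coloring (n m : ℕ) :
    IsPackingColoring (GG n m) (n + 1)
      (fun x => match x with | Sum.inl u => u.1 + 2 | Sum.inr _ => 1) := by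
  constructor
  · rintro (u | p)
    · have := u.2
      simp only []
      omega
    · simp
  · rintro (u | p) (v | q) hne heq
    · exfalso
      apply hne
      simp only [] at heq
      exact congrArg Sum.inl (Fin.ext (by omega))
    · simp only [] at heq
      omega
    · simp only [] at heq
      omega
    · have hadj : ¬ (GG n m).Adj (Sum.inr p) (Sum.inr q) := fun h => h
      simpa using one_lt_edist hne hadj

end Stmt3Aux

/-- `χ_ρ(FSSD_m(K_n)) = n + 1`. -/
theorem stmt_3 (n m : ℕ) (hn : 3 ≤ n) (hm : 1 ≤ m) :
    packingChromaticNumber (FSSD (⊤ : SimpleGraph (Fin n)) m) = n + 1 := by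
  have hmem : (n + 1) ∈ {k | ∃ c, IsPackingColoring (FSSD (⊤ : SimpleGraph (Fin n)) m) k c} :=
    ⟨_, Stmt3Aux.exists_coloring n m⟩
  apply le_antisymm
  · exact Nat.sInf_le hmem
  · by_contra h
    push_neg at h
    obtain ⟨c, hc⟩ := Nat.sInf_mem (⟨_, hmem⟩ :
      {k | ∃ c, IsPackingColoring (FSSD (⊤ : SimpleGraph (Fin n)) m) k c}.Nonempty)
    apply Stmt3Aux.no_packing n m hn hm c
    refine ⟨fun v => ⟨(hc.1 v).1, le_trans (hc.1 v).2 ?_⟩, hc.2⟩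
    unfold packingChromaticNumber at h
    omega
end

section
/- Let G be a graph and m ≥ 1. If there exists an optimal packing coloring of FSSD_m(G) that assigns color 1 to every subdivided vertex (every vertex not corresponding to a vertex of G), then χ_ρ(FSSD_m(G)) = χ_ρ(FSSD_{m+1}(G)). -/
open SimpleGraph

theorem edist_map_le {V W : Type*} {G : SimpleGraph V} {H : SimpleGraph W}
    (f : G →g H) (u v : V) : H.edist (f u) (f v) ≤ G.edist u v := by
  refine le_iInf fun w => ?_
  calc H.edist (f u) (f v) ≤ (w.map f).length := SimpleGraph.edist_le _
    _ = (w.length : ℕ∞) := by rw [SimpleGraph.Walk.length_map]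

/-- hom from FSSD (m+1) to FSSD m (m ≥ 1), fixing original vertices -/
def fssdDown {V : Type*} (G : SimpleGraph V) (m : ℕ) (hm : 1 ≤ m) :
    FSSD G (m + 1) →g FSSD G m where
  toFun x := match x with
    | Sum.inl v => Sum.inl v
    | Sum.inr (e, i) => Sum.inr (e, if h : i.val < m then ⟨i.val, h⟩ else ⟨0, hm⟩)
  map_rel' := by rintro (u | ⟨e, i⟩) (v | ⟨f, j⟩) h <;> simp_all [FSSD]

/-- hom from FSSD m to FSSD (m+1), fixing original vertices -/
def fssdUp {V : Type*} (G : SimpleGraph V) (m : ℕ) :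
    FSSD G m →g FSSD G (m + 1) where
  toFun x := match x with
    | Sum.inl v => Sum.inl v
    | Sum.inr (e, i) => Sum.inr (e, i.castSucc)
  map_rel' := by rintro (u | ⟨e, i⟩) (v | ⟨f, j⟩) h <;> simp_all [FSSD]

@[simp] lemma fssdDown_inl {V : Type*} (G : SimpleGraph V) (m : ℕ) (hm : 1 ≤ m) (v : V) :
    fssdDown G m hm (Sum.inl v) = Sum.inl v := rfl

@[simp] lemma fssdDown_inr {V : Type*} (G : SimpleGraph V) (m : ℕ) (hm : 1 ≤ m)
    (e : G.edgeSet) (i : Fin (m+1)) :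
    fssdDown G m hm (Sum.inr (e, i)) =
      Sum.inr (e, if h : i.val < m then ⟨i.val, h⟩ else ⟨0, hm⟩) := rfl

@[simp] lemma fssdUp_inl {V : Type*} (G : SimpleGraph V) (m : ℕ) (v : V) :
    fssdUp G m (Sum.inl v) = Sum.inl v := rfl

@[simp] lemma fssdUp_inr {V : Type*} (G : SimpleGraph V) (m : ℕ)
    (e : G.edgeSet) (i : Fin m) :
    fssdUp G m (Sum.inr (e, i)) = Sum.inr (e, i.castSucc) := rfl


/-- if some optimal packing coloring of `FSSD_m(G)` assigns color `1`
to every subdivided vertex, then `χ_ρ(FSSD_m(G)) = χ_ρ(FSSD_{m+1}(G))`. -/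
theorem stmt_5 {V : Type*} (G : SimpleGraph V) (m : ℕ) (hm : 1 ≤ m)
    (h : ∃ c : (V ⊕ (G.edgeSet × Fin m)) → ℕ,
      IsPackingColoring (FSSD G m) (packingChromaticNumber (FSSD G m)) c ∧
      ∀ x : G.edgeSet × Fin m, c (Sum.inr x) = 1) :
    packingChromaticNumber (FSSD G m) = packingChromaticNumber (FSSD G (m + 1)) := by
  obtain ⟨c, hc, hc1⟩ := h
  set k := packingChromaticNumber (FSSD G m) with hk
  have hmem : k ∈ {k' | ∃ c' : (V ⊕ (G.edgeSet × Fin (m+1))) → ℕ,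
      IsPackingColoring (FSSD G (m+1)) k' c'} := by
    refine ⟨c ∘ (fssdDown G m hm), fun v => hc.1 _, fun x y hxy hcxy => ?_⟩
    by_cases hfe : (fssdDown G m hm) x = (fssdDown G m hm) y
    · match x, y with
      | Sum.inl u, Sum.inl v =>
        rw [fssdDown_inl, fssdDown_inl, Sum.inl.injEq] at hfe
        exact (hxy (congrArg Sum.inl hfe)).elim
      | Sum.inl u, Sum.inr p =>
        rw [fssdDown_inl, show (Sum.inr p : V ⊕ (G.edgeSet × Fin (m+1))) = Sum.inr (p.1, p.2) from rfl,
          fssdDown_inr] at hfe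
        exact absurd hfe (by simp)
      | Sum.inr p, Sum.inl u =>
        rw [fssdDown_inl, show (Sum.inr p : V ⊕ (G.edgeSet × Fin (m+1))) = Sum.inr (p.1, p.2) from rfl,
          fssdDown_inr] at hfe
        exact absurd hfe (by simp)
      | Sum.inr (e, i), Sum.inr (f, j) =>
        have h1 : c ((fssdDown G m hm) (Sum.inr (e, i))) = 1 := by
          rw [fssdDown_inr]; exact hc1 _
        rw [Function.comp_apply, h1]
        have hne : (FSSD G (m+1)).edist (Sum.inr (e, i)) (Sum.inr (f, j)) ≠ 0 := by
          simp [hxy]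
        have hno : ¬ (FSSD G (m+1)).Adj (Sum.inr (e, i)) (Sum.inr (f, j)) := by
          simp [FSSD]
        refine lt_of_le_of_ne (ENat.one_le_iff_ne_zero.mpr hne) ?_
        intro h1e
        exact hno (SimpleGraph.edist_eq_one_iff_adj.mp h1e.symm)
    · have := hc.2 _ _ hfe hcxy
      exact lt_of_lt_of_le this (edist_map_le (fssdDown G m hm) x y)
  refine le_antisymm ?_ ?_
  · have hne : {k' | ∃ c' : (V ⊕ (G.edgeSet × Fin (m+1))) → ℕ,
        IsPackingColoring (FSSD G (m+1)) k' c'}.Nonempty := ⟨k, hmem⟩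
    obtain ⟨c', hc'⟩ := Nat.sInf_mem hne
    refine Nat.sInf_le ⟨c' ∘ (fssdUp G m), fun v => hc'.1 _, fun x y hxy hcxy => ?_⟩
    have hinj : (fssdUp G m) x ≠ (fssdUp G m) y := by
      intro he
      apply hxy
      match x, y with
      | Sum.inl u, Sum.inl v =>
        rw [fssdUp_inl, fssdUp_inl, Sum.inl.injEq] at he
        exact congrArg Sum.inl he
      | Sum.inl u, Sum.inr p =>
        rw [fssdUp_inl, show (Sum.inr p : V ⊕ (G.edgeSet × Fin m)) = Sum.inr (p.1, p.2) from rfl,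
          fssdUp_inr] at he
        exact absurd he (by simp)
      | Sum.inr p, Sum.inl u =>
        rw [fssdUp_inl, show (Sum.inr p : V ⊕ (G.edgeSet × Fin m)) = Sum.inr (p.1, p.2) from rfl,
          fssdUp_inr] at he
        exact absurd he (by simp)
      | Sum.inr (e, i), Sum.inr (f, j) =>
        rw [fssdUp_inr, fssdUp_inr, Sum.inr.injEq, Prod.mk.injEq] at he
        exact congrArg Sum.inr (Prod.ext he.1 (Fin.castSucc_injective m he.2))
    have := hc'.2 _ _ hinj hcxy
    exact lt_of_lt_of_le this (edist_map_le (fssdUp G m) x y)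
  · exact Nat.sInf_le hmem
end

section
/- If G is any graph with minimum degree δ(G) ≥ 1 and m > χ_ρ(G)/δ(G) is a positive integer, then χ_ρ(FSSD_m(G)) = χ_ρ(FSSD_{m+1}(G)). -/
open SimpleGraph

section Aux

variable {V : Type*}

/-- The set of admissible packing-coloring sizes is nonempty for a finite graph. -/
lemma packing_set_nonempty [Finite V] (G : SimpleGraph V) :
    {k | ∃ c : V → ℕ, IsPackingColoring G k c}.Nonempty := by
  obtain ⟨n, ⟨e⟩⟩ := Finite.exists_equiv_fin V
  refine ⟨n, fun v => (e v : ℕ) + 1, fun v => ⟨Nat.succ_le_succ (Nat.zero_le _),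
    Nat.succ_le_of_lt (e v).isLt⟩, fun u v hne hc => ?_⟩
  exfalso
  apply hne
  apply e.injective
  apply Fin.val_injective
  simp only at hc
  omega

/-- Graph homomorphisms do not increase extended distance. -/
lemma hom_edist_le {W : Type*} {G : SimpleGraph V} {H : SimpleGraph W}
    (f : G →g H) (u v : V) : H.edist (f u) (f v) ≤ G.edist u v := by
  rcases eq_or_ne (G.edist u v) ⊤ with h | h
  · simp [h]
  · obtain ⟨p, hp⟩ := SimpleGraph.exists_walk_of_edist_ne_top h
    calc H.edist (f u) (f v) ≤ (p.map f).length := SimpleGraph.edist_le _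
      _ = (p.length : ℕ∞) := by rw [SimpleGraph.Walk.length_map]
      _ = G.edist u v := hp

/-- Re-indexing the parallel subdivision vertices gives graph homomorphisms
between super subdivisions. -/
def fssdHom (G : SimpleGraph V) {a b : ℕ} (g : Fin a → Fin b) :
    FSSD G a →g FSSD G b where
  toFun x := match x with
    | Sum.inl u => Sum.inl u
    | Sum.inr (e, j) => Sum.inr (e, g j)
  map_rel' := by
    rintro (u | ⟨e, j⟩) (w | ⟨f, i⟩) h <;> exact h

lemma mem_edge_cases {G : SimpleGraph V} {s : Sym2 V} (hs : s ∈ G.edgeSet)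
    {u w : V} (hu : u ∈ s) (hw : w ∈ s) : u = w ∨ G.Adj u w := by
  induction s using Sym2.ind with
  | _ a b =>
    rw [Sym2.mem_iff] at hu hw
    rw [SimpleGraph.mem_edgeSet] at hs
    rcases hu with rfl | rfl <;> rcases hw with rfl | rfl
    · exact Or.inl rfl
    · exact Or.inr hs
    · exact Or.inr hs.symm
    · exact Or.inl rfl

/-- Any walk between original vertices of `FSSD_m(G)` projects to a walk of at most
half the length in `G`. -/
lemma fssd_walk_aux (G : SimpleGraph V) (m : ℕ) :
    ∀ (n : ℕ) (x y : V ⊕ (G.edgeSet × Fin m)) (p : (FSSD G m).Walk x y),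
      p.length = n → ∀ u v : V, x = Sum.inl u → y = Sum.inl v →
      ∃ q : G.Walk u v, 2 * q.length ≤ n := by
  intro n
  induction n using Nat.strong_induction_on with
  | _ n ih =>
    intro x y p hp u v hx hy
    cases p with
    | nil =>
      subst hx
      cases hy
      refine ⟨SimpleGraph.Walk.nil, ?_⟩
      simp only [SimpleGraph.Walk.length_nil] at hp ⊢
      omega
    | @cons _ z _ h p' =>
      subst hx hy
      match z, h with
      | Sum.inr ⟨e, j⟩, h =>
        cases p' with
        | cons h' p'' =>
          match h' with
          | _ =>
            rename_i z' _
            match z', h' with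
            | Sum.inl w, h' =>
              have hlen : p''.length < n := by
                simp only [SimpleGraph.Walk.length_cons] at hp; omega
              obtain ⟨q, hq⟩ := ih p''.length hlen _ _ p'' rfl w v rfl rfl
              rcases mem_edge_cases e.2 (h : u ∈ (e.1 : Sym2 V)) (h' : w ∈ (e.1 : Sym2 V)) with
                rfl | hadj
              · refine ⟨q, ?_⟩
                simp only [SimpleGraph.Walk.length_cons] at hp; omega
              · refine ⟨SimpleGraph.Walk.cons hadj q, ?_⟩
                simp only [SimpleGraph.Walk.length_cons] at hp ⊢; omega

/-- Distances between original vertices grow by at least one in a super subdivision. -/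
lemma edist_fssd_inl (G : SimpleGraph V) (m : ℕ) {u v : V} (huv : u ≠ v) :
    G.edist u v + 1 ≤ (FSSD G m).edist (Sum.inl u) (Sum.inl v) := by
  rcases eq_or_ne ((FSSD G m).edist (Sum.inl u) (Sum.inl v)) ⊤ with h | h
  · simp [h]
  · obtain ⟨p, hp⟩ := SimpleGraph.exists_walk_of_edist_ne_top h
    obtain ⟨q, hq⟩ := fssd_walk_aux G m p.length _ _ p rfl u v rfl rfl
    have h1 : 1 ≤ q.length := by
      rcases Nat.eq_zero_or_pos q.length with h0 | h0
      · exact absurd (q.eq_of_length_eq_zero h0) huv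
      · exact h0
    calc G.edist u v + 1 ≤ (q.length : ℕ∞) + (q.length : ℕ∞) :=
          add_le_add (SimpleGraph.edist_le q) (by exact_mod_cast h1)
      _ = ((2 * q.length : ℕ) : ℕ∞) := by push_cast; ring
      _ ≤ (p.length : ℕ∞) := by exact_mod_cast hq
      _ = _ := hp

/-- Distinct subdivision vertices are at distance at least 2. -/
lemma one_lt_edist_inr {G : SimpleGraph V} {m : ℕ}
    {x y : G.edgeSet × Fin m} (hxy : x ≠ y) :
    (1 : ℕ∞) < (FSSD G m).edist (Sum.inr x) (Sum.inr y) := by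
  have hne : (Sum.inr x : V ⊕ (G.edgeSet × Fin m)) ≠ Sum.inr y := fun h => hxy (by injection h)
  have hnadj : ¬ (FSSD G m).Adj (Sum.inr x) (Sum.inr y) := fun h => h
  refine lt_of_le_of_ne (Order.one_le_iff_pos.mpr (SimpleGraph.edist_pos_of_ne hne)) ?_
  intro h
  exact hnadj (SimpleGraph.edist_eq_one_iff_adj.mp h.symm)

/-- Upper bound: `χ_ρ(FSSD_m(G)) ≤ χ_ρ(G) + 1`. -/
lemma fssd_upper [Finite V] (G : SimpleGraph V) (m : ℕ) :
    packingChromaticNumber (FSSD G m) ≤ packingChromaticNumber G + 1 := by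
  obtain ⟨c, hc⟩ := Nat.sInf_mem (packing_set_nonempty G)
  set k := packingChromaticNumber G with hk
  apply Nat.sInf_le
  refine ⟨fun x => match x with | Sum.inl u => c u + 1 | Sum.inr _ => 1, ?_, ?_⟩
  · rintro (u | e)
    · exact ⟨Nat.le_add_left 1 _, Nat.succ_le_succ (hc.1 u).2⟩
    · exact ⟨le_refl 1, Nat.le_add_left 1 _⟩
  · rintro (u | x) (v | y) hne hceq
    · have huv : u ≠ v := fun h => hne (by rw [h])
      have hceq' : c u + 1 = c v + 1 := hceq
      have h1 : (c u : ℕ∞) < G.edist u v := hc.2 u v huv (by omega)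
      have h2 : G.edist u v + 1 ≤ (FSSD G m).edist (Sum.inl u) (Sum.inl v) :=
        edist_fssd_inl G m huv
      have h3 : ((c u : ℕ∞)) + 1 < G.edist u v + 1 :=
        WithTop.add_lt_add_right WithTop.one_ne_top h1
      calc ((c u + 1 : ℕ) : ℕ∞) = (c u : ℕ∞) + 1 := by push_cast; ring
        _ < G.edist u v + 1 := h3
        _ ≤ _ := h2
    · exfalso; have := (hc.1 u).1; simp at hceq; omega
    · exfalso; have := (hc.1 v).1; simp at hceq; omega
    · have hxy : x ≠ y := fun h => hne (by rw [h])
      exact one_lt_edist_inr hxy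

/-- Under the degree hypothesis, no original vertex can receive color 1. -/
lemma no_inl_one [Fintype V] (G : SimpleGraph V) [DecidableRel G.Adj]
    {m k : ℕ} {c : V ⊕ (G.edgeSet × Fin m) → ℕ}
    (hc : IsPackingColoring (FSSD G m) k c)
    (hk : k ≤ m * G.minDegree) (u : V) : 2 ≤ c (Sum.inl u) := by
  classical
  by_contra hcon
  have hu1 : c (Sum.inl u) = 1 := by have := (hc.1 (Sum.inl u)).1; omega
  -- every subdivision vertex incident to u is adjacent to `inl u`
  have hadj : ∀ (w : V) (hw : w ∈ G.neighborSet u) (j : Fin m),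
      (FSSD G m).Adj (Sum.inl u) (Sum.inr (⟨s(u, w), hw⟩, j)) := by
    intro w hw j
    exact Sym2.mem_mk_left u w
  -- colors of these vertices lie in [2, k]
  have hcol : ∀ (w : V) (hw : w ∈ G.neighborSet u) (j : Fin m),
      c (Sum.inr (⟨s(u, w), hw⟩, j)) ∈ Finset.Icc 2 k := by
    intro w hw j
    have h1 := (hc.1 (Sum.inr (⟨s(u, w), hw⟩, j))).1
    have h2 := (hc.1 (Sum.inr (⟨s(u, w), hw⟩, j))).2
    rw [Finset.mem_Icc]
    refine ⟨?_, h2⟩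
    by_contra hlt
    have heq1 : c (Sum.inr (⟨s(u, w), hw⟩, j)) = 1 := by omega
    have hne : (Sum.inl u : V ⊕ (G.edgeSet × Fin m)) ≠ Sum.inr (⟨s(u, w), hw⟩, j) := by simp
    have hlt2 := hc.2 _ _ hne (by rw [hu1, heq1])
    have hE : (FSSD G m).edist (Sum.inl u) (Sum.inr (⟨s(u, w), hw⟩, j)) = 1 :=
      SimpleGraph.edist_eq_one_iff_adj.mpr (hadj w hw j)
    rw [hE, hu1] at hlt2
    exact absurd hlt2 (by simp)
  -- the coloring is injective on these vertices
  set F : G.neighborSet u × Fin m → (Finset.Icc 2 k : Finset ℕ) :=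
    fun p => ⟨c (Sum.inr (⟨s(u, p.1.1), p.1.2⟩, p.2)), hcol p.1.1 p.1.2 p.2⟩ with hF
  have hinj : Function.Injective F := by
    rintro ⟨⟨w, hw⟩, j⟩ ⟨⟨w', hw'⟩, j'⟩ hEq
    by_contra hne
    have hvne : (Sum.inr (⟨s(u, w), hw⟩, j) : V ⊕ (G.edgeSet × Fin m)) ≠
        Sum.inr (⟨s(u, w'), hw'⟩, j') := by
      intro hcontra
      apply hne
      injection hcontra with h'
      have he : (s(u, w) : Sym2 V) = s(u, w') := congrArg (fun q => (q.1 : Sym2 V)) h'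
      have hj : j = j' := congrArg Prod.snd h'
      have hww : w = w' := by
        rcases (Sym2.eq_iff.mp he) with ⟨_, h2⟩ | ⟨h1, h2⟩
        · exact h2
        · rw [← h1, h2]
      subst hww; subst hj; rfl
    have hceq : c (Sum.inr (⟨s(u, w), hw⟩, j)) = c (Sum.inr (⟨s(u, w'), hw'⟩, j')) := by
      have := congrArg Subtype.val hEq
      exact this
    have hlt := hc.2 _ _ hvne hceq
    have h2le : 2 ≤ c (Sum.inr (⟨s(u, w), hw⟩, j)) := by
      have := hcol w hw j; rw [Finset.mem_Icc] at this; exact this.1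
    have htri : (FSSD G m).edist (Sum.inr (⟨s(u, w), hw⟩, j)) (Sum.inr (⟨s(u, w'), hw'⟩, j'))
        ≤ 2 := by
      calc (FSSD G m).edist _ _ ≤ (FSSD G m).edist (Sum.inr (⟨s(u, w), hw⟩, j)) (Sum.inl u) +
            (FSSD G m).edist (Sum.inl u) (Sum.inr (⟨s(u, w'), hw'⟩, j')) :=
            SimpleGraph.edist_triangle
        _ ≤ 1 + 1 := add_le_add
            (SimpleGraph.edist_eq_one_iff_adj.mpr ((hadj w hw j).symm)).le
            (SimpleGraph.edist_eq_one_iff_adj.mpr (hadj w' hw' j')).le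
        _ = 2 := by norm_num
    have : ((c (Sum.inr (⟨s(u, w), hw⟩, j)) : ℕ∞)) < 2 := lt_of_lt_of_le hlt htri
    have : c (Sum.inr (⟨s(u, w), hw⟩, j)) < 2 := by exact_mod_cast this
    omega
  have hcard := Nat.card_le_card_of_injective F hinj
  have hc1 : Nat.card (↥(G.neighborSet u) × Fin m) = G.degree u * m := by
    rw [Nat.card_prod, Nat.card_eq_fintype_card, Nat.card_eq_fintype_card,
      Fintype.card_fin]
    congr 1
    exact G.card_neighborSet_eq_degree u
  have hc2 : Nat.card (↥(Finset.Icc 2 k : Finset ℕ)) = k - 1 := by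
    rw [Nat.card_eq_fintype_card, Fintype.card_coe, Nat.card_Icc]
    omega
  rw [hc1, hc2] at hcard
  have hdeg : G.minDegree ≤ G.degree u := G.minDegree_le_degree u
  have : m * G.minDegree ≤ G.degree u * m := by
    rw [mul_comm]; exact Nat.mul_le_mul_right m hdeg
  have hk1 : 1 ≤ k := le_trans (by omega : 1 ≤ c (Sum.inl u)) (hc.1 (Sum.inl u)).2
  omega

end Aux

/-- if `δ(G) ≥ 1` and `m > χ_ρ(G)/δ(G)`, then
`χ_ρ(FSSD_m(G)) = χ_ρ(FSSD_{m+1}(G))`. -/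
theorem stmt_6 {V : Type*} [Fintype V] (G : SimpleGraph V) [DecidableRel G.Adj]
    (hδ : 1 ≤ G.minDegree) (m : ℕ) (hm : 1 ≤ m)
    (h : (packingChromaticNumber G : ℚ) / (G.minDegree : ℚ) < (m : ℚ)) :
    packingChromaticNumber (FSSD G m) = packingChromaticNumber (FSSD G (m + 1)) := by
  classical
  -- derive `χ_ρ(G) + 1 ≤ m * δ(G)` from the rational hypothesis
  have hδQ : (0 : ℚ) < (G.minDegree : ℚ) := by exact_mod_cast lt_of_lt_of_le one_pos hδ
  have hmul : (packingChromaticNumber G : ℚ) < (m : ℚ) * (G.minDegree : ℚ) := by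
    rw [div_lt_iff₀ hδQ] at h; exact h
  have hmulN : packingChromaticNumber G < m * G.minDegree := by exact_mod_cast hmul
  have hkey : packingChromaticNumber G + 1 ≤ m * G.minDegree := hmulN
  haveI hV : Nonempty V := by
    by_contra hV
    rw [not_nonempty_iff] at hV
    have : G.minDegree = 0 := by simp [SimpleGraph.minDegree]
    omega
  apply le_antisymm
  · -- χ_ρ(FSSD_m) ≤ χ_ρ(FSSD_{m+1}) : restrict an optimal coloring
    obtain ⟨c, hc⟩ := Nat.sInf_mem (packing_set_nonempty (FSSD G (m + 1)))
    apply Nat.sInf_le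
    set ψ : FSSD G m →g FSSD G (m + 1) := fssdHom G (Fin.castSucc) with hψ
    refine ⟨fun x => c (ψ x), ?_, ?_⟩
    · intro x; exact hc.1 (ψ x)
    · intro x y hxy hceq
      have hψinj : ψ x ≠ ψ y := by
        intro hEq
        apply hxy
        match x, y, hEq with
        | Sum.inl u, Sum.inl v, hEq => injection hEq with h'; rw [h']
        | Sum.inr (e, j), Sum.inr (f, i), hEq =>
          injection hEq with h'
          have h1 : e = f := congrArg Prod.fst h'
          have h2 : Fin.castSucc j = Fin.castSucc i := congrArg Prod.snd h'
          rw [h1, Fin.castSucc_injective _ h2]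
      calc ((c (ψ x) : ℕ∞)) < (FSSD G (m + 1)).edist (ψ x) (ψ y) := hc.2 _ _ hψinj hceq
        _ ≤ (FSSD G m).edist x y := hom_edist_le ψ x y
  · -- χ_ρ(FSSD_{m+1}) ≤ χ_ρ(FSSD_m) : recolor all subdivision vertices with 1
    obtain ⟨c, hc⟩ := Nat.sInf_mem (packing_set_nonempty (FSSD G m))
    set k := packingChromaticNumber (FSSD G m) with hkdef
    have hkb : k ≤ m * G.minDegree :=
      le_trans (fssd_upper G m) hkey
    have hno1 : ∀ u : V, 2 ≤ c (Sum.inl u) := fun u => no_inl_one G hc hkb u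
    apply Nat.sInf_le
    set φ : FSSD G (m + 1) →g FSSD G m :=
      fssdHom G (fun j : Fin (m + 1) =>
        if hj : (j : ℕ) < m then ⟨j, hj⟩ else ⟨0, hm⟩) with hφ
    refine ⟨fun x => match x with | Sum.inl u => c (Sum.inl u) | Sum.inr _ => 1, ?_, ?_⟩
    · rintro (u | e)
      · exact hc.1 (Sum.inl u)
      · refine ⟨le_refl 1, ?_⟩
        exact le_trans (hc.1 (Sum.inl (Classical.arbitrary V))).1
          (hc.1 (Sum.inl (Classical.arbitrary V))).2
    · rintro (u | x) (v | y) hne hceq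
      · have huv : (Sum.inl u : V ⊕ (G.edgeSet × Fin m)) ≠ Sum.inl v := by
          intro hEq; apply hne; injection hEq with h'; rw [h']
        calc ((c (Sum.inl u) : ℕ∞)) < (FSSD G m).edist (Sum.inl u) (Sum.inl v) :=
              hc.2 _ _ huv hceq
          _ = (FSSD G m).edist (φ (Sum.inl u)) (φ (Sum.inl v)) := rfl
          _ ≤ (FSSD G (m + 1)).edist (Sum.inl u) (Sum.inl v) := hom_edist_le φ _ _
      · exfalso; have := hno1 u; simp only at hceq; omega
      · exfalso; have := hno1 v; simp only at hceq; omega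
      · have hxy : x ≠ y := fun hEq => hne (by rw [hEq])
        exact one_lt_edist_inr hxy
end

section
/- For n ≥ 3 and m ≥ 1, the packing chromatic number of FSSD_m(C_n) equals 3 if n is even and 4 if n is odd. -/
open SimpleGraph

section Cycle

variable (k m : ℕ) (hm : 1 ≤ m)

-- basic Fin (k+3) facts
lemma fin_succ_ne (j : Fin (k+3)) : j + 1 ≠ j := by
  intro h
  have h1 : (1 : Fin (k+3)) = 0 := by
    have := congrArg (· - j) h
    simp only [add_sub_cancel_left, sub_self] at this
    exact this
  have := congrArg Fin.val h1
  simp [Fin.val_one', Fin.val_zero, Nat.mod_eq_of_lt] at this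

lemma fin_two_add_ne (j : Fin (k+3)) : j + 1 + 1 ≠ j := by
  intro h
  have h2 : (1 : Fin (k+3)) + 1 = 0 := by
    have := congrArg (· - j) h
    calc (1 : Fin (k+3)) + 1 = j + 1 + 1 - j := by abel
    _ = j - j := by rw [h]
    _ = 0 := sub_self j
  have := congrArg Fin.val h2
  rw [Fin.val_add] at this
  simp [Fin.val_one', Fin.val_zero, Nat.mod_eq_of_lt] at this

lemma cyc_adj_succ (j : Fin (k+3)) : (cycleGraph (k+3)).Adj j (j+1) := by
  rw [cycleGraph_adj']
  right
  rw [add_sub_cancel_left]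
  simp [Fin.val_one', Nat.mod_eq_of_lt]

lemma cyc_adj_val {a b : Fin (k+3)} (h : (cycleGraph (k+3)).Adj a b) :
    a.val = b.val + 1 ∨ b.val = a.val + 1 ∨ (a.val = 0 ∧ b.val = k+2) ∨
      (b.val = 0 ∧ a.val = k+2) := by
  rw [cycleGraph_adj'] at h
  have hone : (1 : Fin (k+3)).val = 1 := by simp [Fin.val_one', Nat.mod_eq_of_lt]
  have hb := b.isLt
  have ha := a.isLt
  rcases h with h | h
  · have h' : a - b = 1 := by apply Fin.ext; rw [h, hone]
    have h'' : a = b + 1 := by rwa [sub_eq_iff_eq_add'] at h'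
    have hv := congrArg Fin.val h''
    rw [Fin.val_add, hone] at hv
    rcases Nat.lt_or_ge (b.val + 1) (k+3) with hlt | hge
    · rw [Nat.mod_eq_of_lt hlt] at hv; omega
    · have heq : b.val + 1 = k + 3 := by omega
      rw [heq, Nat.mod_self] at hv; omega
  · have h' : b - a = 1 := by apply Fin.ext; rw [h, hone]
    have h'' : b = a + 1 := by rwa [sub_eq_iff_eq_add'] at h'
    have hv := congrArg Fin.val h''
    rw [Fin.val_add, hone] at hv
    rcases Nat.lt_or_ge (a.val + 1) (k+3) with hlt | hge
    · rw [Nat.mod_eq_of_lt hlt] at hv; omega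
    · have heq : a.val + 1 = k + 3 := by omega
      rw [heq, Nat.mod_self] at hv; omega

-- edges of the cycle
def EC (j : Fin (k+3)) : (cycleGraph (k+3)).edgeSet := ⟨s(j, j+1), cyc_adj_succ k j⟩

lemma EC_injval {j l : Fin (k+3)} (h : EC k j = EC k l) : j = l := by
  have h' : s(j, j+1) = s(l, l+1) := congrArg Subtype.val h
  rw [Sym2.eq_iff] at h'
  rcases h' with ⟨h1, _⟩ | ⟨h1, h2⟩
  · exact h1
  · exfalso
    rw [h1] at h2
    exact fin_two_add_ne k l h2

end Cycle

section FSSDlem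

variable {V : Type*} {G : SimpleGraph V} {m : ℕ}

lemma FSSD_adj_flip {a b : V ⊕ (G.edgeSet × Fin m)} (h : (FSSD G m).Adj a b) :
    a.isLeft = !b.isLeft := by
  rcases a with u | e <;> rcases b with v | f <;> simp_all <;> exact h

lemma FSSD_walk_parity {a b : V ⊕ (G.edgeSet × Fin m)} (W : (FSSD G m).Walk a b) :
    Even W.length ↔ a.isLeft = b.isLeft := by
  induction W with
  | nil => simp
  | @cons a x b h p ih =>
    rw [Walk.length_cons, Nat.even_add_one, ih, FSSD_adj_flip h]
    cases x.isLeft <;> cases b.isLeft <;> simp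

lemma FSSD_walk_two {u v : V} (W : (FSSD G m).Walk (Sum.inl u) (Sum.inl v))
    (hl : W.length = 2) (hne : u ≠ v) : G.Adj u v := by
  cases W with
  | nil => simp at hl
  | @cons _ x _ h p =>
    cases p with
    | nil => simp at hl
    | @cons _ y _ h' p' =>
      cases p' with
      | nil =>
        rcases x with w | e
        · exact h.elim
        · have hu : u ∈ (e.1 : Sym2 V) := h
          have hv : v ∈ (e.1 : Sym2 V) := h'
          have he : (e.1 : Sym2 V) = s(u, v) := (Sym2.mem_and_mem_iff hne).mp ⟨hu, hv⟩
          have := e.1.2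
          rw [he] at this
          exact this
      | cons h'' p'' => simp [Walk.length_cons] at hl

lemma FSSD_far {u v : V} (hne : u ≠ v) (hnadj : ¬ G.Adj u v) :
    3 < (FSSD G m).edist (Sum.inl u) (Sum.inl v) := by
  by_contra h
  push_neg at h
  have htop : (FSSD G m).edist (Sum.inl u) (Sum.inl v) ≠ ⊤ := by
    intro h'
    rw [h'] at h
    exact absurd (top_le_iff.mp h) (by decide)
  obtain ⟨p, hp⟩ := exists_walk_of_edist_ne_top htop
  have hlen : p.length ≤ 3 := by
    have : (p.length : ℕ∞) ≤ 3 := hp ▸ h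
    exact_mod_cast this
  have heven : Even p.length := (FSSD_walk_parity p).mpr rfl
  interval_cases hh : p.length
  · exact hne (Sum.inl.inj (p.eq_of_length_eq_zero hh))
  · simp at heven
  · exact hnadj (FSSD_walk_two p hh hne)
  · simp [Nat.even_add_one, Nat.even_iff] at heven

lemma FSSD_inr_far {e f : G.edgeSet × Fin m} (hne : e ≠ f) :
    1 < (FSSD G m).edist (Sum.inr e) (Sum.inr f) := by
  have h0 : (FSSD G m).edist (Sum.inr e) (Sum.inr f) ≠ 0 := by
    rw [ne_eq, edist_eq_zero_iff]; simpa using hne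
  have h1 : (FSSD G m).edist (Sum.inr e) (Sum.inr f) ≠ 1 := by
    rw [ne_eq, edist_eq_one_iff_adj]; intro h; exact h
  exact lt_of_le_of_ne (ENat.one_le_iff_ne_zero.mpr h0) (Ne.symm h1)

lemma FSSD_edist_le_two {a b c : V ⊕ (G.edgeSet × Fin m)}
    (h1 : (FSSD G m).Adj a b) (h2 : (FSSD G m).Adj b c) :
    (FSSD G m).edist a c ≤ 2 := by
  have := edist_le (Walk.cons h1 (Walk.cons h2 Walk.nil))
  simpa using this

end FSSDlem

open Fin.NatCast

section Main

variable (k m : ℕ)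

def SVx (hm : 0 < m) (j : Fin (k+3)) :
    (Fin (k+3)) ⊕ ((cycleGraph (k+3)).edgeSet × Fin m) :=
  Sum.inr (EC k j, ⟨0, hm⟩)

lemma adj_x_sv (hm : 0 < m) (j : Fin (k+3)) :
    (FSSD (cycleGraph (k+3)) m).Adj (Sum.inl j) (SVx k m hm j) := by
  show j ∈ s(j, j+1)
  simp

lemma adj_sv_x (hm : 0 < m) (j : Fin (k+3)) :
    (FSSD (cycleGraph (k+3)) m).Adj (SVx k m hm j) (Sum.inl (j+1)) := by
  show (j+1) ∈ s(j, j+1)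
  simp

lemma SVx_inj {hm : 0 < m} {j l : Fin (k+3)} (h : SVx k m hm j = SVx k m hm l) : j = l := by
  unfold SVx at h
  have := Sum.inr.inj h
  exact EC_injval k (congrArg Prod.fst this)

def wseq (hm : 0 < m) (t : ℕ) : (Fin (k+3)) ⊕ ((cycleGraph (k+3)).edgeSet × Fin m) :=
  if t % 2 = 0 then Sum.inl (↑(t/2)) else SVx k m hm (↑(t/2))

lemma wseq_congr (hm : 0 < m) (t1 t2 : ℕ) (h2 : t1 % 2 = t2 % 2)
    (hd : ((t1/2 : ℕ) : Fin (k+3)) = ((t2/2 : ℕ) : Fin (k+3))) :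
    wseq k m hm t1 = wseq k m hm t2 := by
  unfold wseq
  rw [h2, hd]

lemma wseq_period (hm : 0 < m) (q r : ℕ) :
    wseq k m hm (2*(k+3)*q + r) = wseq k m hm r := by
  have hM : 2*(k+3)*q = 2*((k+3)*q) := by ring
  apply wseq_congr
  · omega
  · have hdiv : (2*(k+3)*q + r)/2 = (k+3)*q + r/2 := by omega
    rw [hdiv]
    apply Fin.ext; rw [Fin.val_natCast, Fin.val_natCast, Nat.mul_add_mod_self_left]

lemma wseq_adj (hm : 0 < m) (t : ℕ) :
    (FSSD (cycleGraph (k+3)) m).Adj (wseq k m hm t) (wseq k m hm (t+1)) := by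
  by_cases h : t % 2 = 0
  · have h1 : ¬ ((t+1) % 2 = 0) := by omega
    have h2 : (t+1)/2 = t/2 := by omega
    unfold wseq
    rw [if_pos h, if_neg h1, h2]
    exact adj_x_sv k m hm _
  · have h1 : (t+1) % 2 = 0 := by omega
    have h2 : (t+1)/2 = t/2 + 1 := by omega
    unfold wseq
    rw [if_neg h, if_pos h1, h2, Nat.cast_add, Nat.cast_one]
    exact adj_sv_x k m hm _

lemma wseq_edist (hm : 0 < m) (t d : ℕ) :
    (FSSD (cycleGraph (k+3)) m).edist (wseq k m hm t) (wseq k m hm (t+d)) ≤ d := by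
  induction d with
  | zero => simp [edist_self]
  | succ d ih =>
    have htri := SimpleGraph.edist_triangle (G := FSSD (cycleGraph (k+3)) m)
      (u := wseq k m hm t) (v := wseq k m hm (t+d)) (w := wseq k m hm (t+d+1))
    have hone : (FSSD (cycleGraph (k+3)) m).edist (wseq k m hm (t+d)) (wseq k m hm (t+d+1)) = 1 :=
      edist_eq_one_iff_adj.mpr (wseq_adj k m hm (t+d))
    rw [hone] at htri
    refine le_trans (le_trans htri (add_le_add_left ih 1)) (le_of_eq ?_)
    push_cast
    rfl

lemma wseq_ne (hm : 0 < m) (t d : ℕ) (h1 : 1 ≤ d) (h3 : d ≤ 3) :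
    wseq k m hm t ≠ wseq k m hm (t+d) := by
  rcases Nat.even_or_odd d with hev | hodd
  · -- d = 2
    have hd2 : d = 2 := by rcases hev with ⟨r, hr⟩; omega
    subst hd2
    by_cases h : t % 2 = 0
    · have h1' : (t+2) % 2 = 0 := by omega
      have h2' : (t+2)/2 = t/2 + 1 := by omega
      unfold wseq
      rw [if_pos h, if_pos h1', h2', Nat.cast_add, Nat.cast_one]
      intro hh
      exact fin_succ_ne k _ (Sum.inl.inj hh).symm
    · have h1' : ¬ ((t+2) % 2 = 0) := by omega
      have h2' : (t+2)/2 = t/2 + 1 := by omega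
      unfold wseq
      rw [if_neg h, if_neg h1', h2', Nat.cast_add, Nat.cast_one]
      intro hh
      exact fin_succ_ne k _ (SVx_inj k m hh).symm
  · -- d odd: parity mismatch
    have hpar : ¬ ((t + d) % 2 = t % 2) := by
      rcases hodd with ⟨r, hr⟩; omega
    by_cases h : t % 2 = 0
    · have h1' : ¬ ((t+d) % 2 = 0) := by omega
      unfold wseq
      rw [if_pos h, if_neg h1']
      simp [SVx]
    · have h1' : (t+d) % 2 = 0 := by omega
      unfold wseq
      rw [if_neg h, if_pos h1']
      simp [SVx]

end Main

def cEven (k m : ℕ) : (Fin (k+3)) ⊕ ((cycleGraph (k+3)).edgeSet × Fin m) → ℕ :=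
  Sum.elim (fun j => 2 + j.val % 2) (fun _ => 1)

def cOdd (k m : ℕ) : (Fin (k+3)) ⊕ ((cycleGraph (k+3)).edgeSet × Fin m) → ℕ :=
  Sum.elim (fun j => if j.val = k+2 then 4 else 2 + j.val % 2) (fun _ => 1)

lemma pack_even (k m : ℕ) (he : Even (k+3)) :
    IsPackingColoring (FSSD (cycleGraph (k+3)) m) 3 (cEven k m) := by
  constructor
  · rintro (j | e) <;> simp [cEven] <;> omega
  · rintro (a | e) (b | f) hne hc
    · have hab : a ≠ b := fun h => hne (by rw [h])
      have hpar : a.val % 2 = b.val % 2 := by simp [cEven] at hc; omega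
      have hnadj : ¬ (cycleGraph (k+3)).Adj a b := by
        intro hadj
        have h4 := cyc_adj_val k hadj
        have hke : (k+3) % 2 = 0 := Nat.even_iff.mp he
        have ha := a.isLt
        have hb := b.isLt
        omega
      have hfar := FSSD_far (m := m) hab hnadj
      have hle : (cEven k m (Sum.inl a) : ℕ∞) ≤ 3 := by
        have h3 : cEven k m (Sum.inl a) ≤ 3 := by simp [cEven]; omega
        exact_mod_cast h3
      exact lt_of_le_of_lt hle hfar
    · simp [cEven] at hc; omega
    · simp [cEven] at hc; omega
    · have hef : e ≠ f := fun h => hne (by rw [h])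
      have hfar := FSSD_inr_far (m := m) hef
      have : (cEven k m (Sum.inr e) : ℕ∞) = 1 := by simp [cEven]
      rw [this]
      exact hfar

lemma pack_odd (k m : ℕ) :
    IsPackingColoring (FSSD (cycleGraph (k+3)) m) 4 (cOdd k m) := by
  constructor
  · rintro (j | e) <;> simp [cOdd] <;> split <;> omega
  · rintro (a | e) (b | f) hne hc
    · have hab : a ≠ b := fun h => hne (by rw [h])
      have ha := a.isLt
      have hb := b.isLt
      by_cases ha2 : a.val = k+2
      · by_cases hb2 : b.val = k+2
        · exact absurd (Fin.ext (by omega) : a = b) hab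
        · simp [cOdd, ha2, hb2] at hc
          omega
      · by_cases hb2 : b.val = k+2
        · simp [cOdd, ha2, hb2] at hc
          omega
        · have hpar : a.val % 2 = b.val % 2 := by simp [cOdd, ha2, hb2] at hc; omega
          have hnadj : ¬ (cycleGraph (k+3)).Adj a b := by
            intro hadj
            have h4 := cyc_adj_val k hadj
            omega
          have hfar := FSSD_far (m := m) hab hnadj
          have hle : (cOdd k m (Sum.inl a) : ℕ∞) ≤ 3 := by
            have h3 : cOdd k m (Sum.inl a) ≤ 3 := by simp [cOdd, ha2]; omega
            exact_mod_cast h3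
          exact lt_of_le_of_lt hle hfar
    · simp [cOdd] at hc; split at hc <;> omega
    · simp [cOdd] at hc; split at hc <;> omega
    · have hef : e ≠ f := fun h => hne (by rw [h])
      have hfar := FSSD_inr_far (m := m) hef
      have h1 : (cOdd k m (Sum.inr e) : ℕ∞) = 1 := by simp [cOdd]
      rw [h1]
      exact hfar

lemma no2 (k m : ℕ) (hm' : 0 < m) :
    ∀ c, ¬ IsPackingColoring (FSSD (cycleGraph (k+3)) m) 2 c := by
  rintro c ⟨hb, hcol⟩
  have hxne : ∀ j : Fin (k+3),
      (Sum.inl j : Fin (k+3) ⊕ ((cycleGraph (k+3)).edgeSet × Fin m)) ≠ Sum.inl (j+1) := by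
    intro j h
    exact fin_succ_ne k j (Sum.inl.inj h).symm
  have hsv2 : ∀ j : Fin (k+3), c (SVx k m hm' j) = 2 := by
    intro j
    rcases hb (SVx k m hm' j) with ⟨hb1, hb2⟩
    rcases Nat.lt_or_ge (c (SVx k m hm' j)) 2 with h | h
    · exfalso
      have h1 : c (SVx k m hm' j) = 1 := by omega
      have hx2 : ∀ i : Fin (k+3),
          (FSSD (cycleGraph (k+3)) m).Adj (Sum.inl i) (SVx k m hm' j) → c (Sum.inl i) = 2 := by
        intro i hadj
        rcases hb (Sum.inl i) with ⟨hc1, hc2⟩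
        rcases Nat.lt_or_ge (c (Sum.inl i)) 2 with hh | hh
        · exfalso
          have hci : c (Sum.inl i) = 1 := by omega
          have hnei : (Sum.inl i : Fin (k+3) ⊕ ((cycleGraph (k+3)).edgeSet × Fin m))
              ≠ SVx k m hm' j := by simp [SVx]
          have hlt := hcol _ _ hnei (by rw [hci, h1])
          rw [hci, edist_eq_one_iff_adj.mpr hadj] at hlt
          simp at hlt
        · omega
      have h2a := hx2 j (adj_x_sv k m hm' j)
      have h2b := hx2 (j+1) (adj_sv_x k m hm' j).symm
      have hlt := hcol _ _ (hxne j) (h2a.trans h2b.symm)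
      rw [h2a] at hlt
      have hdd := FSSD_edist_le_two (adj_x_sv k m hm' j) (adj_sv_x k m hm' j)
      have hcontra := hlt.trans_le hdd
      simp at hcontra
    · omega
  have hne01 : SVx k m hm' 0 ≠ SVx k m hm' (0+1) :=
    fun h => fin_succ_ne k 0 (SVx_inj k m h).symm
  have hlt := hcol _ _ hne01 ((hsv2 0).trans (hsv2 (0+1)).symm)
  rw [hsv2 0] at hlt
  have hdd := FSSD_edist_le_two (adj_sv_x k m hm' 0).symm.symm (adj_x_sv k m hm' (0+1))
  have hcontra := hlt.trans_le hdd
  simp at hcontra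


lemma comb (n : ℕ) (hn : 3 ≤ n) (hodd : ¬ Even n) (g : ZMod (2*n) → ℕ)
    (h13 : ∀ i, 1 ≤ g i ∧ g i ≤ 3)
    (hp : ∀ (i : ZMod (2*n)) (d : ℕ), 1 ≤ d → d ≤ 3 → d ≤ g i →
      g (i + (d : ZMod (2*n))) ≠ g i) : False := by
  -- basic consequences
  have h1 : ∀ i : ZMod (2*n), g i ≥ 1 → g (i + 1) ≠ g i := by
    intro i hi
    have := hp i 1 le_rfl (by omega) hi
    simpa using this
  have h1' : ∀ i : ZMod (2*n), g (i + 1) ≠ g i := fun i => h1 i (h13 i).1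
  have h2 : ∀ i : ZMod (2*n), 2 ≤ g i → g (i + 2) ≠ g i := by
    intro i hi
    have := hp i 2 (by omega) (by omega) hi
    simpa using this
  have h3 : ∀ i : ZMod (2*n), 3 ≤ g i → g (i + 3) ≠ g i := by
    intro i hi
    have := hp i 3 (by omega) (by omega) hi
    simpa using this
  -- no "2 then 3"
  have no23 : ∀ i : ZMod (2*n), ¬ (g i = 2 ∧ g (i + 1) = 3) := by
    rintro i ⟨hi2, hi3⟩
    have e1 : (i - 1) + 1 = i := by ring
    have e2 : (i - 1) + 2 = i + 1 := by ring
    have e3 : (i - 2) + 1 = i - 1 := by ring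
    have e4 : (i - 2) + 2 = i := by ring
    have e5 : (i - 2) + 3 = i + 1 := by ring
    have hm1 : g (i - 1) = 1 := by
      have a1 : g (i - 1) ≠ 2 := by
        intro h; exact h1' (i-1) (by rw [e1, hi2, h])
      have a2 : g (i - 1) ≠ 3 := by
        intro h; exact h2 (i-1) (by omega) (by rw [e2, hi3, h])
      have := h13 (i - 1); omega
    have b1 : g (i - 2) ≠ 1 := by
      intro h; exact h1' (i-2) (by rw [e3, hm1, h])
    have b2 : g (i - 2) ≠ 2 := by
      intro h; exact h2 (i-2) (by omega) (by rw [e4, hi2, h])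
    have b3 : g (i - 2) ≠ 3 := by
      intro h; exact h3 (i-2) (by omega) (by rw [e5, hi3, h])
    have := h13 (i - 2); omega
  -- no "3 then 2"
  have no32 : ∀ i : ZMod (2*n), ¬ (g i = 3 ∧ g (i + 1) = 2) := by
    rintro i ⟨hi3, hi2⟩
    have e1 : (i + 1) + 1 = i + 2 := by ring
    have e2 : (i + 2) + 1 = i + 3 := by ring
    have e3 : (i + 1) + 2 = i + 3 := by ring
    have hm1 : g (i + 2) = 1 := by
      have a1 : g (i + 2) ≠ 2 := by
        intro h; exact h1' (i+1) (by rw [e1, hi2, h])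
      have a2 : g (i + 2) ≠ 3 := by
        intro h; exact h2 i (by omega) (by rw [hi3, h])
      have := h13 (i + 2); omega
    have b1 : g (i + 3) ≠ 1 := by
      intro h; exact h1' (i+2) (by rw [e2, hm1, h])
    have b2 : g (i + 3) ≠ 2 := by
      intro h; exact h2 (i+1) (by omega) (by rw [e3, hi2, h])
    have b3 : g (i + 3) ≠ 3 := by
      intro h; exact h3 i (by omega) (by rw [hi3, h])
    have := h13 (i + 3); omega
  -- alternation: if g i ≠ 1 then g (i+2) = 5 - g i and g(i+2) ≠ 1
  have key : ∀ i : ZMod (2*n), g i ≠ 1 → g (i + 2) = 5 - g i := by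
    intro i hi
    have hgi := h13 i
    have hmid : g (i + 1) = 1 := by
      have a1 : g (i + 1) ≠ g i := h1' i
      have hh := h13 (i + 1)
      rcases Nat.lt_or_ge (g (i+1)) 2 with h | h
      · omega
      · exfalso
        have : g i = 2 ∧ g (i+1) = 3 ∨ g i = 3 ∧ g (i+1) = 2 := by omega
        rcases this with h' | h'
        · exact no23 i h'
        · exact no32 i h'
    have e1 : (i + 1) + 1 = i + 2 := by ring
    have a1 : g (i + 2) ≠ 1 := by
      intro h; exact h1' (i+1) (by rw [e1, hmid, h])
    have a2 : g (i + 2) ≠ g i := h2 i (by omega)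
    have hh := h13 (i + 2)
    omega
  -- pick a starting point with g ≠ 1
  obtain ⟨i₀, hi₀⟩ : ∃ i : ZMod (2*n), g i ≠ 1 := by
    by_cases h : g 0 = 1
    · exact ⟨1, by intro hh; exact h1' 0 (by simpa [h, hh] using (by rw [zero_add] : (0:ZMod (2*n)) + 1 = 1) ▸ rfl)⟩
    · exact ⟨0, h⟩
  -- iterate
  have iter : ∀ t : ℕ, g (i₀ + (2*t : ℕ)) = if Even t then g i₀ else 5 - g i₀ := by
    intro t
    induction t with
    | zero => simp
    | succ t ih =>
      have estep : i₀ + ((2*(t+1) : ℕ) : ZMod (2*n)) = (i₀ + (2*t : ℕ)) + 2 := by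
        push_cast; ring
      have hne1 : g (i₀ + (2*t : ℕ)) ≠ 1 := by
        have := h13 i₀; rw [ih]; split <;> omega
      rw [estep, key _ hne1, ih]
      rcases Nat.even_or_odd t with h | h
      · simp [h, Nat.even_add_one, h]
      · have h' : ¬ Even t := Nat.not_even_iff_odd.mpr h
        have := h13 i₀
        simp [h', Nat.even_add_one]
        omega
  have hfin := iter n
  rw [ZMod.natCast_self, add_zero] at hfin
  have := h13 i₀
  simp [hodd] at hfin
  omega

lemma no3 (k m : ℕ) (hm' : 0 < m) (ho : ¬ Even (k+3)) :
    ∀ c, ¬ IsPackingColoring (FSSD (cycleGraph (k+3)) m) 3 c := by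
  rintro c ⟨hb, hcol⟩
  haveI : NeZero (2*(k+3)) := ⟨by omega⟩
  refine comb (k+3) (by omega) ho (fun i => c (wseq k m hm' i.val)) (fun i => hb _) ?_
  intro i d hd1 hd3 hdg hEq
  have hlt2 : d < 2*(k+3) := by omega
  have hval : (i + (d : ZMod (2*(k+3)))).val = (i.val + d) % (2*(k+3)) := by
    rw [ZMod.val_add, ZMod.val_natCast, Nat.mod_eq_of_lt hlt2]
  have hsplit : 2*(k+3)*((i.val + d)/(2*(k+3))) + (i.val + d) % (2*(k+3)) = i.val + d :=
    Nat.div_add_mod _ _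
  have hper : wseq k m hm' ((i.val + d) % (2*(k+3))) = wseq k m hm' (i.val + d) := by
    conv_rhs => rw [← hsplit]
    rw [wseq_period]
  rw [hval, hper] at hEq
  have hnew : wseq k m hm' i.val ≠ wseq k m hm' (i.val + d) := wseq_ne k m hm' i.val d hd1 hd3
  have hlt := hcol _ _ hnew hEq.symm
  have hdist := wseq_edist k m hm' i.val d
  have hlt2' : (c (wseq k m hm' i.val) : ℕ∞) < (d : ℕ∞) := lt_of_lt_of_le hlt hdist
  have hfin : c (wseq k m hm' i.val) < d := by exact_mod_cast hlt2'
  have hdg' : d ≤ c (wseq k m hm' i.val) := hdg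
  omega


/-- `χ_ρ(FSSD_m(C_n))` is `3` for even `n` and `4` for odd `n`. -/
theorem stmt_8 (n m : ℕ) (hn : 3 ≤ n) (hm : 1 ≤ m) :
    packingChromaticNumber (FSSD (SimpleGraph.cycleGraph n) m) =
      if Even n then 3 else 4 := by

  obtain ⟨k, rfl⟩ : ∃ k, n = k + 3 := ⟨n - 3, by omega⟩
  have hm' : 0 < m := hm
  have weaken : ∀ (k1 k2 : ℕ) (c : (Fin (k+3)) ⊕ ((cycleGraph (k+3)).edgeSet × Fin m) → ℕ),
      IsPackingColoring (FSSD (cycleGraph (k+3)) m) k1 c → k1 ≤ k2 →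
      IsPackingColoring (FSSD (cycleGraph (k+3)) m) k2 c := by
    rintro k1 k2 c ⟨hb, hcol⟩ hk
    exact ⟨fun v => ⟨(hb v).1, le_trans (hb v).2 hk⟩, hcol⟩
  by_cases he : Even (k+3)
  · rw [if_pos he]
    unfold packingChromaticNumber
    apply le_antisymm
    · exact Nat.sInf_le ⟨cEven k m, pack_even k m he⟩
    · refine le_csInf ⟨3, ⟨cEven k m, pack_even k m he⟩⟩ ?_
      rintro b ⟨c, hc⟩
      by_contra hbb
      push_neg at hbb
      exact no2 k m hm' c (weaken b 2 c hc (by omega))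
  · rw [if_neg he]
    unfold packingChromaticNumber
    apply le_antisymm
    · exact Nat.sInf_le ⟨cOdd k m, pack_odd k m⟩
    · refine le_csInf ⟨4, ⟨cOdd k m, pack_odd k m⟩⟩ ?_
      rintro b ⟨c, hc⟩
      by_contra hbb
      push_neg at hbb
      exact no3 k m hm' he c (weaken b 3 c hc (by omega))
end

section
/- If n ≥ 4, m ≥ 1 and p ≥ 2, then χ_ρ(FSSD_m(C_n ⋆ P_p)) ≤ 7 when n ∉ {5, 7, 11}, and χ_ρ(FSSD_m(C_n ⋆ P_p)) ≤ 8 when n ∈ {5, 7, 11}; moreover χ_ρ(FSSD_m(C_3 ⋆ P_p)) ≤ 6. -/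
open SimpleGraph

section Aux
open SimpleGraph

private lemma fin_val_cast_sub {n : ℕ} (a b : Fin n) :
    (((a - b).val : ℕ) : ZMod n) = (a.val : ZMod n) - (b.val : ZMod n) := by
  have h : (a - b).val = (n - b.val + a.val) % n := by
    rw [Fin.sub_def]
  rw [h, ZMod.natCast_mod]
  push_cast [Nat.cast_sub b.isLt.le]
  rw [ZMod.natCast_self]
  ring

private lemma cycle_walk_exists_t {n : ℕ} (x y : Fin n) (w : (cycleGraph n).Walk x y) :
    ∃ t : ℤ, t.natAbs ≤ w.length ∧ ((y.val : ZMod n)) = (x.val : ZMod n) + t := by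
  induction w with
  | nil => exact ⟨0, by simp⟩
  | @cons a b c h w ih =>
    obtain ⟨t, ht, hcast⟩ := ih
    rw [cycleGraph_adj'] at h
    rcases h with h | h
    · refine ⟨t - 1, ?_, ?_⟩
      · simp only [Walk.length_cons]; omega
      · have h2 := fin_val_cast_sub a b
        rw [h] at h2
        rw [hcast]
        have hb : (b.val : ZMod n) = (a.val : ZMod n) - 1 := by
          push_cast at h2; linear_combination h2
        rw [hb]; push_cast; ring
    · refine ⟨t + 1, ?_, ?_⟩
      · simp only [Walk.length_cons]; omega
      · have h2 := fin_val_cast_sub b a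
        rw [h] at h2
        rw [hcast]
        have hb : (b.val : ZMod n) = (a.val : ZMod n) + 1 := by
          push_cast at h2; linear_combination -h2
        rw [hb]; push_cast; ring

private lemma cycle_edist_lb {n g : ℕ} (i k : Fin n) (hik : i.val < k.val)
    (h1 : g ≤ k.val - i.val) (h2 : g ≤ n - (k.val - i.val)) :
    (g : ℕ∞) ≤ (cycleGraph n).edist i k := by
  rw [edist_eq_sInf]
  refine le_sInf ?_
  rintro _ ⟨w, rfl⟩
  by_contra hlt
  push_neg at hlt
  have hlen : w.length < g := by exact_mod_cast hlt
  obtain ⟨t, ht, hcast⟩ := cycle_walk_exists_t i k w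
  have hdvd : (n : ℤ) ∣ ((k.val : ℤ) - i.val - t) := by
    apply (ZMod.intCast_zmod_eq_zero_iff_dvd _ n).mp
    push_cast
    rw [hcast]; ring
  have hin : i.val < n := i.isLt
  have hkn : k.val < n := k.isLt
  have hpos : 0 < (k.val : ℤ) - i.val - t := by omega
  have hub : (k.val : ℤ) - i.val - t < n := by omega
  have := Int.le_of_dvd hpos hdvd
  omega

private lemma fssd_walk_bound {V : Type*} (G : SimpleGraph V) (m : ℕ) :
    ∀ (L : ℕ) (u v : V) (w : (FSSD G m).Walk (Sum.inl u) (Sum.inl v)), w.length ≤ L →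
      2 * G.edist u v ≤ (w.length : ℕ∞) := by
  intro L
  induction L with
  | zero =>
    intro u v w hw
    cases w with
    | nil => simp [edist_self]
    | cons h w' => simp [Walk.length_cons] at hw
  | succ L ih =>
    intro u v w hw
    cases w with
    | nil => simp [edist_self]
    | @cons _ b _ h w' =>
      cases b with
      | inl u' => exact absurd h (by simp [FSSD])
      | inr e =>
        cases w' with
        | @cons _ b2 _ h2 w'' =>
          cases b2 with
          | inr f => exact absurd h2 (by simp [FSSD])
          | inl x =>
            have hu : u ∈ (e.1 : Sym2 V) := h
            have hx : x ∈ (e.1 : Sym2 V) := h2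
            have hlen : w''.length ≤ L := by
              simp only [Walk.length_cons] at hw ⊢; omega
            have hIH := ih x v w'' hlen
            have hadj : G.edist u x ≤ 1 := by
              by_cases hux : u = x
              · subst hux; simp [edist_self]
              · obtain ⟨⟨s, hs⟩, j⟩ := e
                have : G.Adj u x := by
                  revert hu hx
                  induction s using Sym2.ind with
                  | _ a b =>
                    intro hu hx
                    rw [mem_edgeSet] at hs
                    simp only [Sym2.mem_iff] at hu hx
                    rcases hu with rfl | rfl <;> rcases hx with rfl | rfl
                    · exact absurd rfl hux
                    · exact hs
                    · exact hs.symm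
                    · exact absurd rfl hux
                rw [← edist_eq_one_iff_adj] at this
                exact this.le
            have htri : G.edist u v ≤ 1 + G.edist x v :=
              le_trans (SimpleGraph.edist_triangle) (by gcongr)
            calc 2 * G.edist u v ≤ 2 * (1 + G.edist x v) := by gcongr
              _ = 2 + 2 * G.edist x v := by ring
              _ ≤ 2 + (w''.length : ℕ∞) := by gcongr
              _ = ((Walk.cons h (Walk.cons h2 w'')).length : ℕ∞) := by
                  simp only [Walk.length_cons]; push_cast; ring

private lemma fssd_edist {V : Type*} (G : SimpleGraph V) (m : ℕ) (u v : V) :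
    2 * G.edist u v ≤ (FSSD G m).edist (Sum.inl u) (Sum.inl v) := by
  rw [edist_eq_sInf]
  refine le_sInf ?_
  rintro _ ⟨w, rfl⟩
  exact fssd_walk_bound G m w.length u v w le_rfl

private lemma ncorona_walk_bound {V₁ V₂ : Type*} (G : SimpleGraph V₁) (H : SimpleGraph V₂) :
    ∀ (x y : V₁ ⊕ (V₁ × V₂)) (w : (ncorona G H).Walk x y),
      G.edist (Sum.elim id Prod.fst x) (Sum.elim id Prod.fst y) ≤ (w.length : ℕ∞) := by
  intro x y w
  induction w with
  | nil => simp [edist_self]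
  | @cons a b c h w ih =>
    have step : G.edist (Sum.elim id Prod.fst a) (Sum.elim id Prod.fst b) ≤ 1 := by
      cases a with
      | inl u =>
        cases b with
        | inl v =>
          have : G.Adj u v := h
          simpa using (edist_eq_one_iff_adj.mpr this).le
        | inr q =>
          have : G.Adj u q.1 := h
          simpa using (edist_eq_one_iff_adj.mpr this).le
      | inr p =>
        cases b with
        | inl v =>
          have : G.Adj v p.1 := h
          simpa using (edist_eq_one_iff_adj.mpr this.symm).le
        | inr q =>
          have : p.1 = q.1 := h.1
          simp [this, edist_self]
    calc G.edist (Sum.elim id Prod.fst a) (Sum.elim id Prod.fst c)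
        ≤ _ + _ := SimpleGraph.edist_triangle
      _ ≤ 1 + (w.length : ℕ∞) := by gcongr
      _ = ((Walk.cons h w).length : ℕ∞) := by
          simp only [Walk.length_cons]; push_cast; ring

private lemma ncorona_edist {V₁ V₂ : Type*} (G : SimpleGraph V₁) (H : SimpleGraph V₂)
    (x y : V₁ ⊕ (V₁ × V₂)) :
    G.edist (Sum.elim id Prod.fst x) (Sum.elim id Prod.fst y) ≤ (ncorona G H).edist x y := by
  rw [edist_eq_sInf]
  refine le_sInf ?_
  rintro _ ⟨w, rfl⟩
  exact ncorona_walk_bound G H x y w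

private lemma two_le_edist' {V : Type*} {G : SimpleGraph V} {u v : V} (h0 : u ≠ v)
    (h1 : ¬ G.Adj u v) : 2 ≤ G.edist u v := by
  have e0 : G.edist u v ≠ 0 := edist_eq_zero_iff.ne.mpr h0
  have e1 : G.edist u v ≠ 1 := fun h => h1 (edist_eq_one_iff_adj.mp h)
  cases h : G.edist u v using ENat.recTopCoe with
  | top => exact le_top
  | coe a =>
    rw [h] at e0 e1
    exact_mod_cast by
      have h0' : a ≠ 0 := by exact_mod_cast e0
      have h1' : a ≠ 1 := by exact_mod_cast e1
      omega

/-- The gap required between two vertices of the same color `c`. -/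
def gapOf (c : ℕ) : ℕ := if c ≤ 5 then 3 else if c ≤ 7 then 4 else 5

private lemma master (n p m k : ℕ) (f : ℕ → ℕ) (h3 : 3 ≤ k)
    (hf : ∀ i, i < n → 4 ≤ f i ∧ f i ≤ 8 ∧ f i ≤ k)
    (hgap : ∀ i j, i < j → j < n → f i = f j →
      gapOf (f i) ≤ j - i ∧ gapOf (f i) ≤ n - (j - i)) :
    ∃ c, IsPackingColoring (FSSD (ncorona (cycleGraph n) (pathGraph p)) m) k c := by
  classical
  set G := ncorona (cycleGraph n) (pathGraph p) with hG
  refine ⟨Sum.elim (Sum.elim (fun i => f i.val) (fun q => 2 + q.2.val % 2)) (fun _ => 1),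
    ?_, ?_⟩
  · rintro ((i | q) | e) <;> simp only [Sum.elim_inl, Sum.elim_inr]
    · have := hf i.val i.isLt; omega
    · have := Nat.mod_lt q.2.val (show 0 < 2 by norm_num); omega
    · omega
  · have key : ∀ (a b : Fin n), a.val < b.val → f a.val = f b.val →
        (f a.val : ℕ∞) < (FSSD G m).edist (Sum.inl (Sum.inl a)) (Sum.inl (Sum.inl b)) := by
      intro a b hab hcol
      obtain ⟨hg1, hg2⟩ := hgap a.val b.val hab b.isLt hcol
      have hcy : (gapOf (f a.val) : ℕ∞) ≤ (cycleGraph n).edist a b :=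
        cycle_edist_lb a b hab hg1 hg2
      have hnc : (cycleGraph n).edist a b ≤ G.edist (Sum.inl a) (Sum.inl b) := by
        simpa using ncorona_edist (cycleGraph n) (pathGraph p) (Sum.inl a) (Sum.inl b)
      have hfd := fssd_edist G m (Sum.inl a) (Sum.inl b)
      have hcg : f a.val < 2 * gapOf (f a.val) := by
        have := hf a.val a.isLt
        unfold gapOf; split_ifs <;> omega
      calc (f a.val : ℕ∞) < ((2 * gapOf (f a.val) : ℕ) : ℕ∞) := by exact_mod_cast hcg
        _ = 2 * (gapOf (f a.val) : ℕ∞) := by push_cast; ring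
        _ ≤ 2 * (cycleGraph n).edist a b := by gcongr
        _ ≤ 2 * G.edist (Sum.inl a) (Sum.inl b) := by gcongr
        _ ≤ _ := hfd
    rintro ((i | q) | e) ((i' | q') | e') hne hcol <;>
      simp only [Sum.elim_inl, Sum.elim_inr] at hcol ⊢
    · have hne' : i ≠ i' := fun h => hne (by rw [h])
      rcases lt_trichotomy i.val i'.val with hlt | heq | hgt
      · exact key i i' hlt hcol
      · exact absurd (Fin.ext heq) hne'
      · rw [SimpleGraph.edist_comm, hcol]
        exact key i' i hgt hcol.symm
    · have := hf i.val i.isLt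
      have := Nat.mod_lt q'.2.val (show 0 < 2 by norm_num)
      omega
    · have := hf i.val i.isLt; omega
    · have := hf i'.val i'.isLt
      have := Nat.mod_lt q.2.val (show 0 < 2 by norm_num)
      omega
    · have hne' : q ≠ q' := fun h => hne (by rw [h])
      have hnadj : ¬ G.Adj (Sum.inr q) (Sum.inr q') := by
        intro hadj
        have h1 : q.1 = q'.1 := hadj.1
        have h2 : (pathGraph p).Adj q.2 q'.2 := hadj.2
        rw [pathGraph_adj] at h2
        have : q.2 = q'.2 := by
          have := Fin.ext_iff (a := q.2) (b := q'.2)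
          omega
        exact hne' (Prod.ext h1 this)
      have h2e : (2 : ℕ∞) ≤ G.edist (Sum.inr q) (Sum.inr q') :=
        two_le_edist' (fun h => hne' (by simpa using h)) hnadj
      have hfd := fssd_edist G m (Sum.inr q) (Sum.inr q')
      calc ((2 + q.2.val % 2 : ℕ) : ℕ∞) < ((4 : ℕ) : ℕ∞) := by
            exact_mod_cast by omega
        _ = 2 * (2 : ℕ∞) := by norm_num
        _ ≤ 2 * G.edist (Sum.inr q) (Sum.inr q') := by gcongr
        _ ≤ _ := hfd
    · omega
    · have := hf i'.val i'.isLt; omega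
    · omega
    · have hnadj : ¬ (FSSD G m).Adj (Sum.inr e) (Sum.inr e') := fun h => h
      have := two_le_edist' hne hnadj
      calc (1 : ℕ∞) < 2 := by norm_num
        _ ≤ _ := this

def t6f : ℕ → ℕ | 0=>4|1=>5|2=>6|3=>4|4=>5|_=>7
def t9f : ℕ → ℕ | 0=>4|1=>5|2=>6|3=>4|4=>7|5=>5|6=>4|7=>6|_=>7
def t11f : ℕ → ℕ | 0=>5|1=>4|2=>6|3=>5|4=>4|5=>7|6=>5|7=>4|8=>6|9=>5|_=>7
def t7s : ℕ → ℕ | 0=>4|1=>5|2=>6|3=>4|4=>5|5=>7|_=>8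
def t11s : ℕ → ℕ | 0=>4|1=>5|2=>6|3=>4|4=>5|5=>7|6=>4|7=>6|8=>5|9=>7|_=>8

private lemma t6f_bounds : ∀ j, 4 ≤ t6f j ∧ t6f j ≤ 7 := by
  intro j; rcases j with _|_|_|_|_|j <;> simp [t6f]
private lemma t9f_bounds : ∀ j, 4 ≤ t9f j ∧ t9f j ≤ 7 := by
  intro j; rcases j with _|_|_|_|_|_|_|_|j <;> simp [t9f]
private lemma t11f_bounds : ∀ j, 4 ≤ t11f j ∧ t11f j ≤ 7 := by
  intro j; rcases j with _|_|_|_|_|_|_|_|_|_|j <;> simp [t11f]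
private lemma t7s_bounds : ∀ j, 4 ≤ t7s j ∧ t7s j ≤ 8 := by
  intro j; rcases j with _|_|_|_|_|_|j <;> simp [t7s]
private lemma t11s_bounds : ∀ j, 4 ≤ t11s j ∧ t11s j ≤ 8 := by
  intro j; rcases j with _|_|_|_|_|_|_|_|_|_|j <;> simp [t11s]

private lemma gap_case0 (n : ℕ) (hmod : n % 4 = 0) :
    ∀ i j, i < j → j < n → 4 + i % 4 = 4 + j % 4 →
      gapOf (4 + i % 4) ≤ j - i ∧ gapOf (4 + i % 4) ≤ n - (j - i) := by
  intro i j hij hjn heq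
  unfold gapOf; split_ifs <;> omega

private lemma gap_case2 (n : ℕ) (h6 : 6 ≤ n) (hmod : n % 4 = 2) :
    ∀ i j, i < j → j < n →
      (if i < n - 6 then 4 + i % 4 else t6f (i - (n - 6))) =
      (if j < n - 6 then 4 + j % 4 else t6f (j - (n - 6))) →
      gapOf (if i < n - 6 then 4 + i % 4 else t6f (i - (n - 6))) ≤ j - i ∧
      gapOf (if i < n - 6 then 4 + i % 4 else t6f (i - (n - 6))) ≤ n - (j - i) := by
  intro i j hij hjn heq
  split_ifs at heq ⊢ with hi hj
  · unfold gapOf; split_ifs <;> omega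
  · obtain ⟨t, rfl⟩ : ∃ t, j = (n-6)+t := ⟨j - (n-6), by omega⟩
    have e : n - 6 + t - (n-6) = t := by omega
    rw [e] at heq
    have ht : t < 6 := by omega
    interval_cases t <;> norm_num [t6f] at heq <;> unfold gapOf <;> split_ifs <;> omega
  · omega
  · obtain ⟨s, rfl⟩ : ∃ s, i = (n-6)+s := ⟨i - (n-6), by omega⟩
    obtain ⟨t, rfl⟩ : ∃ t, j = (n-6)+t := ⟨j - (n-6), by omega⟩
    have e1 : n - 6 + s - (n-6) = s := by omega
    have e2 : n - 6 + t - (n-6) = t := by omega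
    rw [e1] at heq ⊢; rw [e2] at heq
    have hs : s < 6 := by omega
    have ht : t < 6 := by omega
    interval_cases s <;> interval_cases t <;> simp [t6f, gapOf] at heq ⊢ <;> omega

private lemma gap_case1 (n : ℕ) (h9 : 9 ≤ n) (hmod : n % 4 = 1) :
    ∀ i j, i < j → j < n →
      (if i < n - 9 then 4 + i % 4 else t9f (i - (n - 9))) =
      (if j < n - 9 then 4 + j % 4 else t9f (j - (n - 9))) →
      gapOf (if i < n - 9 then 4 + i % 4 else t9f (i - (n - 9))) ≤ j - i ∧
      gapOf (if i < n - 9 then 4 + i % 4 else t9f (i - (n - 9))) ≤ n - (j - i) := by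
  intro i j hij hjn heq
  split_ifs at heq ⊢ with hi hj
  · unfold gapOf; split_ifs <;> omega
  · obtain ⟨t, rfl⟩ : ∃ t, j = (n-9)+t := ⟨j - (n-9), by omega⟩
    have e : n - 9 + t - (n-9) = t := by omega
    rw [e] at heq
    have ht : t < 9 := by omega
    interval_cases t <;> norm_num [t9f] at heq <;> unfold gapOf <;> split_ifs <;> omega
  · omega
  · obtain ⟨s, rfl⟩ : ∃ s, i = (n-9)+s := ⟨i - (n-9), by omega⟩
    obtain ⟨t, rfl⟩ : ∃ t, j = (n-9)+t := ⟨j - (n-9), by omega⟩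
    have e1 : n - 9 + s - (n-9) = s := by omega
    have e2 : n - 9 + t - (n-9) = t := by omega
    rw [e1] at heq ⊢; rw [e2] at heq
    have hs : s < 9 := by omega
    have ht : t < 9 := by omega
    interval_cases s <;> interval_cases t <;> simp [t9f, gapOf] at heq ⊢ <;> omega

private lemma gap_case3 (n : ℕ) (h15 : 15 ≤ n) (hmod : n % 4 = 3) :
    ∀ i j, i < j → j < n →
      (if i < n - 11 then 4 + i % 4 else t11f (i - (n - 11))) =
      (if j < n - 11 then 4 + j % 4 else t11f (j - (n - 11))) →
      gapOf (if i < n - 11 then 4 + i % 4 else t11f (i - (n - 11))) ≤ j - i ∧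
      gapOf (if i < n - 11 then 4 + i % 4 else t11f (i - (n - 11))) ≤ n - (j - i) := by
  intro i j hij hjn heq
  split_ifs at heq ⊢ with hi hj
  · unfold gapOf; split_ifs <;> omega
  · obtain ⟨t, rfl⟩ : ∃ t, j = (n-11)+t := ⟨j - (n-11), by omega⟩
    have e : n - 11 + t - (n-11) = t := by omega
    rw [e] at heq
    have ht : t < 11 := by omega
    interval_cases t <;> norm_num [t11f] at heq <;> unfold gapOf <;> split_ifs <;> omega
  · omega
  · obtain ⟨s, rfl⟩ : ∃ s, i = (n-11)+s := ⟨i - (n-11), by omega⟩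
    obtain ⟨t, rfl⟩ : ∃ t, j = (n-11)+t := ⟨j - (n-11), by omega⟩
    have e1 : n - 11 + s - (n-11) = s := by omega
    have e2 : n - 11 + t - (n-11) = t := by omega
    rw [e1] at heq ⊢; rw [e2] at heq
    have hs : s < 11 := by omega
    have ht : t < 11 := by omega
    interval_cases s <;> interval_cases t <;> simp [t11f, gapOf] at heq ⊢ <;> omega

end Aux

/-- upper bounds for `χ_ρ(FSSD_m(C_n ⋆ P_p))`. -/
theorem stmt_13 (m p : ℕ) (hm : 1 ≤ m) (hp : 2 ≤ p) :
    (∀ n : ℕ, 4 ≤ n → n ∉ ({5, 7, 11} : Set ℕ) →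
      packingChromaticNumber
        (FSSD (ncorona (SimpleGraph.cycleGraph n) (SimpleGraph.pathGraph p)) m) ≤ 7) ∧
    (∀ n : ℕ, n ∈ ({5, 7, 11} : Set ℕ) →
      packingChromaticNumber
        (FSSD (ncorona (SimpleGraph.cycleGraph n) (SimpleGraph.pathGraph p)) m) ≤ 8) ∧
    packingChromaticNumber
      (FSSD (ncorona (SimpleGraph.cycleGraph 3) (SimpleGraph.pathGraph p)) m) ≤ 6 := by
  obtain hmemdef : ({5, 7, 11} : Set ℕ) = {5, 7, 11} := rfl
  refine ⟨?_, ?_, ?_⟩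
  · intro n h4 hnot
    simp only [Set.mem_insert_iff, Set.mem_singleton_iff, not_or] at hnot
    obtain ⟨h5, h7, h11⟩ := hnot
    apply Nat.sInf_le
    have h04 : n % 4 = 0 ∨ n % 4 = 1 ∨ n % 4 = 2 ∨ n % 4 = 3 := by omega
    rcases h04 with hc | hc | hc | hc
    · exact master n p m 7 (fun i => 4 + i % 4) (by norm_num)
        (fun i hi => by
          have : i % 4 < 4 := Nat.mod_lt _ (by norm_num); omega)
        (gap_case0 n hc)
    · have h9 : 9 ≤ n := by omega
      exact master n p m 7 (fun i => if i < n - 9 then 4 + i % 4 else t9f (i - (n - 9)))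
        (by norm_num)
        (fun i hi => by
          split_ifs with h
          · have : i % 4 < 4 := Nat.mod_lt _ (by norm_num); omega
          · have := t9f_bounds (i - (n-9)); omega)
        (gap_case1 n h9 hc)
    · have h6 : 6 ≤ n := by omega
      exact master n p m 7 (fun i => if i < n - 6 then 4 + i % 4 else t6f (i - (n - 6)))
        (by norm_num)
        (fun i hi => by
          split_ifs with h
          · have : i % 4 < 4 := Nat.mod_lt _ (by norm_num); omega
          · have := t6f_bounds (i - (n-6)); omega)
        (gap_case2 n h6 hc)
    · have h15 : 15 ≤ n := by omega
      exact master n p m 7 (fun i => if i < n - 11 then 4 + i % 4 else t11f (i - (n - 11)))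
        (by norm_num)
        (fun i hi => by
          split_ifs with h
          · have : i % 4 < 4 := Nat.mod_lt _ (by norm_num); omega
          · have := t11f_bounds (i - (n-11)); omega)
        (gap_case3 n h15 hc)
  · intro n hmem
    simp only [Set.mem_insert_iff, Set.mem_singleton_iff] at hmem
    apply Nat.sInf_le
    rcases hmem with rfl | rfl | rfl
    · exact master 5 p m 8 (fun i => 4 + i) (by norm_num)
        (fun i hi => by omega)
        (fun i j hij hjn heq => by omega)
    · exact master 7 p m 8 t7s (by norm_num)
        (fun i hi => by have := t7s_bounds i; omega)
        (fun i j hij hjn heq => by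
          have hi7 : i < 7 := by omega
          interval_cases i <;> interval_cases j <;>
            simp [t7s, gapOf] at heq ⊢ <;> omega)
    · exact master 11 p m 8 t11s (by norm_num)
        (fun i hi => by have := t11s_bounds i; omega)
        (fun i j hij hjn heq => by
          have hi11 : i < 11 := by omega
          interval_cases i <;> interval_cases j <;>
            simp [t11s, gapOf] at heq ⊢ <;> omega)
  · apply Nat.sInf_le
    exact master 3 p m 6 (fun i => 4 + i) (by norm_num)
      (fun i hi => by omega)
      (fun i j hij hjn heq => by omega)
end
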